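/- arXiv:1301.2661 — 6 statements merged into one kernel-verified Lean document; each statement's English description precedes it below -/
import Mathlib

section
/- Let A be an arena over a countable vertex set V, let (Ω_n)_{n∈ℕ} be a family of Borel conditions such that the union ⋃_{n∈ℕ} Ω_n is prefix-independent, and let (V_n)_{n∈ℕ} be subsets of V. If for every n ∈ ℕ Eve has a positional strategy that is winning from every vertex of V_n for the condition Ω_n, then Eve has a single positional strategy that is winning from every vertex of ⋃_{n∈ℕ} V_n for the condition ⋃_{n∈ℕ} Ω_n. -/
open Filter Set

/-- An arena: a directed graph on vertex set `V` with no dead-ends, together with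
the set `eve` of vertices controlled by Eve (the rest are controlled by Adam). -/
structure Arena (V : Type) where
  eve : Set V
  edge : V → V → Prop
  succ : ∀ v, ∃ w, edge v w

namespace GameDefs

variable {V : Type}

/-- An infinite play: an infinite path in the arena. -/
def IsPlay (A : Arena V) (π : ℕ → V) : Prop := ∀ k, A.edge (π k) (π (k + 1))

/-- The (strict) history of a play before time `k`. -/
def hist (π : ℕ → V) (k : ℕ) : List V := (List.range k).map π

/-- A general (history-dependent) strategy for Eve. -/
structure EveStrategy (A : Arena V) where
  move : List V → V → V
  legal : ∀ h v, v ∈ A.eve → A.edge v (move h v)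

def EveConsistent (A : Arena V) (σ : EveStrategy A) (π : ℕ → V) : Prop :=
  ∀ k, π k ∈ A.eve → π (k + 1) = σ.move (hist π k) (π k)

def EveWinsFrom (A : Arena V) (σ : EveStrategy A) (Ω : Set (ℕ → V)) (v : V) : Prop :=
  ∀ π, IsPlay A π → π 0 = v → EveConsistent A σ π → π ∈ Ω

/-- Eve's winning region. -/
def WE (A : Arena V) (Ω : Set (ℕ → V)) : Set V :=
  {v | ∃ σ : EveStrategy A, EveWinsFrom A σ Ω v}

/-- A general (history-dependent) strategy for Adam. -/
structure AdamStrategy (A : Arena V) where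
  move : List V → V → V
  legal : ∀ h v, v ∉ A.eve → A.edge v (move h v)

def AdamConsistent (A : Arena V) (τ : AdamStrategy A) (π : ℕ → V) : Prop :=
  ∀ k, π k ∉ A.eve → π (k + 1) = τ.move (hist π k) (π k)

def AdamWinsFrom (A : Arena V) (τ : AdamStrategy A) (Ω : Set (ℕ → V)) (v : V) : Prop :=
  ∀ π, IsPlay A π → π 0 = v → AdamConsistent A τ π → π ∉ Ω

/-- Adam's winning region. -/
def WA (A : Arena V) (Ω : Set (ℕ → V)) : Set V :=
  {v | ∃ τ : AdamStrategy A, AdamWinsFrom A τ Ω v}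

/-- A positional (memoryless) strategy for Eve. -/
structure PosStrategy (A : Arena V) where
  move : V → V
  legal : ∀ v, v ∈ A.eve → A.edge v (move v)

def PosConsistent (A : Arena V) (σ : PosStrategy A) (π : ℕ → V) : Prop :=
  ∀ k, π k ∈ A.eve → π (k + 1) = σ.move (π k)

def PosWinsFrom (A : Arena V) (σ : PosStrategy A) (Ω : Set (ℕ → V)) (v : V) : Prop :=
  ∀ π, IsPlay A π → π 0 = v → PosConsistent A σ π → π ∈ Ω

/-- A memory structure: memory states, initial state, and update function on edges. -/
structure Memory (V : Type) where
  M : Type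
  m0 : M
  upd : M → V → V → M

/-- The sequence of memory states along a play. -/
def memRun (Mem : Memory V) (π : ℕ → V) : ℕ → Mem.M
  | 0 => Mem.m0
  | k + 1 => Mem.upd (memRun Mem π k) (π k) (π (k + 1))

/-- A strategy for Eve using the memory structure `Mem`, given by a next-move function. -/
structure EveMemStrategy (A : Arena V) (Mem : Memory V) where
  move : V → Mem.M → V
  legal : ∀ v m, v ∈ A.eve → A.edge v (move v m)

def EveMemConsistent (A : Arena V) (Mem : Memory V) (σ : EveMemStrategy A Mem)
    (π : ℕ → V) : Prop :=
  ∀ k, π k ∈ A.eve → π (k + 1) = σ.move (π k) (memRun Mem π k)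

def EveMemWinsFrom (A : Arena V) (Mem : Memory V) (σ : EveMemStrategy A Mem)
    (Ω : Set (ℕ → V)) (v : V) : Prop :=
  ∀ π, IsPlay A π → π 0 = v → EveMemConsistent A Mem σ π → π ∈ Ω

/-- A strategy for Adam using the memory structure `Mem`, given by a next-move function. -/
structure AdamMemStrategy (A : Arena V) (Mem : Memory V) where
  move : V → Mem.M → V
  legal : ∀ v m, v ∉ A.eve → A.edge v (move v m)

def AdamMemConsistent (A : Arena V) (Mem : Memory V) (τ : AdamMemStrategy A Mem)
    (π : ℕ → V) : Prop :=
  ∀ k, π k ∉ A.eve → π (k + 1) = τ.move (π k) (memRun Mem π k)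

def AdamMemWinsFrom (A : Arena V) (Mem : Memory V) (τ : AdamMemStrategy A Mem)
    (Ω : Set (ℕ → V)) (v : V) : Prop :=
  ∀ π, IsPlay A π → π 0 = v → AdamMemConsistent A Mem τ π → π ∉ Ω

/-- A condition is prefix-independent if it is closed under adding and removing prefixes. -/
def PrefixIndependent (Ω : Set (ℕ → V)) : Prop :=
  ∀ π : ℕ → V, π ∈ Ω ↔ (fun k => π (k + 1)) ∈ Ω

/-- A condition is Borel if it is a Borel subset of `V^ω` for the product topology,
where `V` carries the discrete topology. -/
def IsBorelCondition (Ω : Set (ℕ → V)) : Prop :=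
  letI : TopologicalSpace V := ⊥
  @MeasurableSet (ℕ → V) (borel (ℕ → V)) Ω

/-- `distB π F k` is the number of steps from position `k` to the next visit of `F`
(`⊤` if `F` is never visited again). -/
noncomputable def distB (π : ℕ → V) (F : Set V) (k : ℕ) : ℕ∞ :=
  sInf ((fun j : ℕ => (j : ℕ∞)) '' {j | π (k + j) ∈ F})

/-- `distC π c k`: number of steps from position `k` to the next position whose
color is even and at most the color at position `k`. -/
noncomputable def distC (π : ℕ → V) (c : V → ℕ) (k : ℕ) : ℕ∞ :=
  sInf ((fun j : ℕ => (j : ℕ∞)) '' {j | Even (c (π (k + j))) ∧ c (π (k + j)) ≤ c (π k)})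

/-- Bounded uniform Büchi condition with bound `N`: `sup_k dist_k(π,F) ≤ N`. -/
def BndBuchi (F : Set V) (N : ℕ) : Set (ℕ → V) :=
  {π | ∀ k, distB π F k ≤ (N : ℕ∞)}

/-- Uniform Büchi condition with bound `N`: `limsup_k dist_k(π,F) ≤ N`. -/
def UnifBuchi (F : Set V) (N : ℕ) : Set (ℕ → V) :=
  {π | Filter.limsup (fun k => distB π F k) Filter.atTop ≤ (N : ℕ∞)}

/-- Finitary Büchi condition: `limsup_k dist_k(π,F) < ∞`. -/
def FinBuchi (F : Set V) : Set (ℕ → V) :=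
  {π | Filter.limsup (fun k => distB π F k) Filter.atTop < ⊤}

/-- Classical Büchi condition: `F` is visited infinitely often. -/
def BuchiCond (F : Set V) : Set (ℕ → V) :=
  {π | ∀ k, ∃ j, k ≤ j ∧ π j ∈ F}

/-- Bounded parity condition: `sup_k dist_k(π,c) < ∞`. -/
def BndParity (c : V → ℕ) : Set (ℕ → V) :=
  {π | (⨆ k, distC π c k) < ⊤}

/-- Finitary parity condition: `limsup_k dist_k(π,c) < ∞`. -/
def FinParity (c : V → ℕ) : Set (ℕ → V) :=
  {π | Filter.limsup (fun k => distC π c k) Filter.atTop < ⊤}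

/-- One-step predecessor operator for Eve. -/
def Pre (A : Arena V) (X : Set V) : Set V :=
  {u | (u ∈ A.eve ∧ ∃ v, A.edge u v ∧ v ∈ X) ∨ (u ∉ A.eve ∧ ∀ v, A.edge u v → v ∈ X)}

/-- Bounded attractor: `AttrE A k X` is the `k`-step attractor of `X` for Eve. -/
def AttrE (A : Arena V) : ℕ → Set V → Set V
  | 0, X => X
  | k + 1, X => AttrE A k X ∪ Pre A (AttrE A k X)

theorem Pre_mono (A : Arena V) : Monotone (Pre A) := by
  intro X Y h u hu
  simp only [Pre, Set.mem_setOf_eq] at hu ⊢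
  rcases hu with ⟨he, v, hv, hvX⟩ | ⟨ha, hall⟩
  · exact Or.inl ⟨he, v, hv, h hvX⟩
  · exact Or.inr ⟨ha, fun v hv => h (hall v hv)⟩

theorem AttrE_mono (A : Arena V) (N : ℕ) : Monotone (AttrE A N) := by
  induction N with
  | zero => intro X Y h; exact h
  | succ n ih =>
      intro X Y h
      exact Set.union_subset_union (ih h) (Pre_mono A (ih h))

end GameDefs

open GameDefs in
/-- union of positional winning strategies for a prefix-independent
countable union of Borel conditions. -/
theorem stmt0 {V : Type} [Countable V] (A : Arena V)
    (Omega : ℕ → Set (ℕ → V)) (hBorel : ∀ n, IsBorelCondition (Omega n))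
    (hPI : PrefixIndependent (⋃ n, Omega n)) (Vn : ℕ → Set V)
    (hwin : ∀ n, ∃ σ : PosStrategy A, ∀ v ∈ Vn n, PosWinsFrom A σ (Omega n) v) :
    ∃ σ : PosStrategy A, ∀ v ∈ ⋃ n, Vn n, PosWinsFrom A σ (⋃ n, Omega n) v := by
  classical
  choose σn hσn using hwin
  set Ω : Set (ℕ → V) := ⋃ n, Omega n with hΩdef
  -- removing a prefix of length K preserves membership in the union
  have tail_mem : ∀ (K : ℕ) (π : ℕ → V), (fun k => π (k + K)) ∈ Ω → π ∈ Ω := by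
    intro K
    induction K with
    | zero => intro π h; simpa using h
    | succ K ih =>
        intro π h
        apply ih
        have heq : (fun k => (fun j => π (j + K)) (k + 1)) = (fun k => π (k + (K + 1))) := by
          funext k
          show π (k + 1 + K) = π (k + (K + 1))
          rw [show k + 1 + K = k + (K + 1) from by omega]
        exact (hPI (fun j => π (j + K))).2 (heq ▸ h)
  -- winning regions for the union condition
  set U : ℕ → Set V := fun n => {v | PosWinsFrom A (σn n) Ω v} with hUdef
  -- closure of U n under moves consistent with σn n
  have step : ∀ n v w, v ∈ U n → A.edge v w → (v ∈ A.eve → w = (σn n).move v) →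
      w ∈ U n := by
    intro n v w hv hedge hmv π hplay h0 hcons
    set π' : ℕ → V := fun k => Nat.casesOn k v (fun j => π j) with hπ'
    have hplay' : IsPlay A π' := by
      intro k
      cases k with
      | zero => show A.edge v (π 0); rw [h0]; exact hedge
      | succ k => exact hplay k
    have hcons' : PosConsistent A (σn n) π' := by
      intro k hk
      cases k with
      | zero => show π 0 = (σn n).move v; rw [h0]; exact hmv hk
      | succ k => exact hcons k hk
    have hmem : π' ∈ Ω := hv π' hplay' rfl hcons'
    exact (hPI π').1 hmem
  -- the combined move function
  set mv : V → V := fun v =>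
    if h : ∃ n, v ∈ U n then (σn (Nat.find h)).move v else Classical.choose (A.succ v)
    with hmvdef
  have mv_pos : ∀ v (h : ∃ n, v ∈ U n), mv v = (σn (Nat.find h)).move v :=
    fun v h => dif_pos h
  have mv_legal : ∀ v, v ∈ A.eve → A.edge v (mv v) := by
    intro v hv
    by_cases h : ∃ n, v ∈ U n
    · rw [mv_pos v h]; exact (σn (Nat.find h)).legal v hv
    · show A.edge v (dite _ _ _); rw [dif_neg h]; exact Classical.choose_spec (A.succ v)
  refine ⟨⟨mv, mv_legal⟩, ?_⟩
  intro v hv π hplay h0 hcons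
  obtain ⟨n0, hn0⟩ := Set.mem_iUnion.1 hv
  have hv0 : π 0 ∈ U n0 := by
    rw [h0]
    intro ρ hρp hρ0 hρc
    exact Set.mem_iUnion.2 ⟨n0, hσn n0 v hn0 ρ hρp hρ0 hρc⟩
  -- every position of the play lies in some U n
  have hk : ∀ k, ∃ n, π k ∈ U n := by
    intro k
    induction k with
    | zero => exact ⟨n0, hv0⟩
    | succ k ih =>
        refine ⟨Nat.find ih, step _ _ _ (Nat.find_spec ih) (hplay k) ?_⟩
        intro he
        rw [hcons k he]
        exact mv_pos _ ih
  have hstep : ∀ k, π (k + 1) ∈ U (Nat.find (hk k)) := by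
    intro k
    refine step _ _ _ (Nat.find_spec (hk k)) (hplay k) ?_
    intro he
    rw [hcons k he]
    exact mv_pos _ (hk k)
  have gdec : ∀ k, Nat.find (hk (k + 1)) ≤ Nat.find (hk k) :=
    fun k => Nat.find_le (hstep k)
  have gmono : ∀ a b, a ≤ b → Nat.find (hk b) ≤ Nat.find (hk a) := by
    intro a b hab
    induction b with
    | zero =>
        have : a = 0 := Nat.le_zero.mp hab
        subst this; exact le_rfl
    | succ b ih =>
        rcases Nat.lt_or_ge a (b + 1) with h | h
        · exact le_trans (gdec b) (ih (by omega))
        · have : a = b + 1 := by omega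
          subst this; exact le_rfl
  -- the index is eventually constant
  have hmem_range : sInf (Set.range fun k => Nat.find (hk k)) ∈
      Set.range fun k => Nat.find (hk k) :=
    Nat.sInf_mem ⟨Nat.find (hk 0), ⟨0, rfl⟩⟩
  obtain ⟨K, hK⟩ := hmem_range
  have hconst : ∀ k, K ≤ k → Nat.find (hk k) = Nat.find (hk K) := by
    intro k hKk
    have h1 : Nat.find (hk k) ≤ Nat.find (hk K) := gmono K k hKk
    have h2 : sInf (Set.range fun k => Nat.find (hk k)) ≤ Nat.find (hk k) :=
      Nat.sInf_le ⟨k, rfl⟩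
    have h3 : Nat.find (hk K) = sInf (Set.range fun k => Nat.find (hk k)) := hK
    omega
  -- the tail play from position K is consistent with a single strategy
  set m : ℕ := Nat.find (hk K) with hm
  set ρ : ℕ → V := fun k => π (k + K) with hρ
  have hρplay : IsPlay A ρ := by
    intro k
    show A.edge (π (k + K)) (π (k + 1 + K))
    rw [show k + 1 + K = k + K + 1 by omega]
    exact hplay (k + K)
  have hρ0 : ρ 0 = π K := by show π (0 + K) = π K; rw [Nat.zero_add]
  have hρcons : PosConsistent A (σn m) ρ := by
    intro k hev
    show π (k + 1 + K) = (σn m).move (π (k + K))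
    rw [show k + 1 + K = k + K + 1 by omega, hcons (k + K) hev]
    show mv (π (k + K)) = (σn m).move (π (k + K))
    rw [mv_pos _ (hk (k + K)), hconst (k + K) (by omega)]
  have hρΩ : ρ ∈ Ω := Nat.find_spec (hk K) ρ hρplay hρ0 hρcons
  exact tail_mem K π hρΩ
end

section
/- Let G = (A,Ω) be a game where Ω is Borel and prefix-independent. Suppose Ξ is an operator assigning to each subarena A' of A a subset Ξ(A') of the vertices of A' such that for every subarena A': (1) Ξ(A') ⊆ W_E(A',Ω); (2) if Eve's winning set W_E(A',Ω) is non-empty then Ξ(A') is non-empty; (3) Eve has a positional winning strategy from every vertex of Ξ(A') in the game (A',Ω). Then Eve has a positional strategy that is winning from every vertex of her winning set W_E(A,Ω). -/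
open Filter Set

namespace GameDefs

/-- `U` induces a subarena if every vertex of `U` has an outgoing edge into `U`. -/
def Subarena {V : Type} (A : Arena V) (U : Set V) : Prop :=
  ∀ v ∈ U, ∃ w ∈ U, A.edge v w

/-- The induced subarena `A[U]`. -/
def restrictArena {V : Type} (A : Arena V) (U : Set V) (h : Subarena A U) : Arena U where
  eve := {v | (v : V) ∈ A.eve}
  edge := fun v w => A.edge (v : V) (w : V)
  succ := fun v => by
    obtain ⟨w, hw, he⟩ := h v v.2
    exact ⟨⟨w, hw⟩, he⟩

/-- The restriction of a condition on plays in `A` to plays in the subarena on `U`. -/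
def restrictCond {V : Type} (U : Set V) (Ω : Set (ℕ → V)) : Set (ℕ → U) :=
  {π | (fun k => (π k : V)) ∈ Ω}

end GameDefs

namespace PFProof
open GameDefs

variable {V : Type}

/-! ### Transfinite attractor -/

noncomputable def stg (A : Arena V) (X : Set V) : Ordinal.{0} → Set V :=
  Ordinal.lt_wf.fix fun o ih => X ∪ Pre A (⋃ b : Set.Iio o, ih b.1 b.2)

lemma stg_eq (A : Arena V) (X : Set V) (o : Ordinal.{0}) :
    stg A X o = X ∪ Pre A (⋃ b : Set.Iio o, stg A X b.1) := by
  rw [stg, WellFounded.fix_eq]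

lemma subset_stg (A : Arena V) (X : Set V) (o : Ordinal.{0}) : X ⊆ stg A X o := by
  rw [stg_eq]; exact Set.subset_union_left

def Att (A : Arena V) (X : Set V) : Set V := ⋃ o : Ordinal.{0}, stg A X o

lemma subset_Att (A : Arena V) (X : Set V) : X ⊆ Att A X :=
  (subset_stg A X 0).trans (Set.subset_iUnion _ 0)

lemma stg_subset_Att (A : Arena V) (X : Set V) (o : Ordinal.{0}) : stg A X o ⊆ Att A X :=
  Set.subset_iUnion _ o

noncomputable def rnk (A : Arena V) (X : Set V) (v : V) : Ordinal.{0} :=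
  sInf {o | v ∈ stg A X o}

lemma rnk_mem (A : Arena V) (X : Set V) {v : V} (hv : v ∈ Att A X) :
    v ∈ stg A X (rnk A X v) := by
  obtain ⟨o, ho⟩ := Set.mem_iUnion.1 hv
  exact csInf_mem (s := {o | v ∈ stg A X o}) ⟨o, ho⟩

lemma rnk_le (A : Arena V) (X : Set V) {v : V} {o : Ordinal.{0}} (hv : v ∈ stg A X o) :
    rnk A X v ≤ o := csInf_le' hv

lemma step_att (A : Arena V) (X : Set V) {v : V} (hv : v ∈ Att A X) (hvX : v ∉ X) :
    v ∈ Pre A (⋃ b : Set.Iio (rnk A X v), stg A X b.1) := by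
  have h := rnk_mem A X hv
  rw [stg_eq] at h
  exact h.resolve_left hvX

lemma mem_big_union_rnk (A : Arena V) (X : Set V) {w : V} {o : Ordinal.{0}}
    (hw : w ∈ ⋃ b : Set.Iio o, stg A X b.1) : w ∈ Att A X ∧ rnk A X w < o := by
  obtain ⟨b, hb⟩ := Set.mem_iUnion.1 hw
  exact ⟨stg_subset_Att A X b.1 hb, lt_of_le_of_lt (rnk_le A X hb) b.2⟩

lemma step_eve (A : Arena V) (X : Set V) {v : V} (hv : v ∈ Att A X) (hvX : v ∉ X)
    (hve : v ∈ A.eve) :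
    ∃ w, A.edge v w ∧ w ∈ Att A X ∧ rnk A X w < rnk A X v := by
  have h := step_att A X hv hvX
  rcases h with ⟨_, w, hw, hwU⟩ | ⟨hna, _⟩
  · exact ⟨w, hw, (mem_big_union_rnk A X hwU).1, (mem_big_union_rnk A X hwU).2⟩
  · exact absurd hve hna

lemma step_adam (A : Arena V) (X : Set V) {v : V} (hv : v ∈ Att A X) (hvX : v ∉ X)
    (hva : v ∉ A.eve) :
    ∀ w, A.edge v w → w ∈ Att A X ∧ rnk A X w < rnk A X v := by
  have h := step_att A X hv hvX
  rcases h with ⟨hve, _⟩ | ⟨_, hall⟩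
  · exact absurd hve hva
  · exact fun w hw => mem_big_union_rnk A X (hall w hw)

lemma pre_Att (A : Arena V) (X : Set V) : Pre A (Att A X) ⊆ Att A X := by
  intro v hv
  rcases hv with ⟨hve, w, hw, hwA⟩ | ⟨hva, hall⟩
  · obtain ⟨o, ho⟩ := Set.mem_iUnion.1 hwA
    apply stg_subset_Att A X (o + 1)
    rw [stg_eq]
    refine Set.mem_union_right _ (Or.inl ⟨hve, w, hw, ?_⟩)
    exact Set.mem_iUnion.2 ⟨⟨o, Order.lt_succ o⟩, ho⟩
  · classical
    by_cases hsucc : ∃ w, A.edge v w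
    · obtain ⟨w0, hw0⟩ := hsucc
      set f : {w // A.edge v w} → Ordinal.{0} := fun w => rnk A X w.1 with hf
      obtain ⟨c, hc⟩ := Ordinal.bddAbove_range.{0,0} f
      apply stg_subset_Att A X (c + 1)
      rw [stg_eq]
      refine Set.mem_union_right _ (Or.inr ⟨hva, fun w hw => ?_⟩)
      refine Set.mem_iUnion.2 ⟨⟨f ⟨w, hw⟩, ?_⟩, rnk_mem A X (hall w hw)⟩
      exact lt_of_le_of_lt (hc ⟨⟨w, hw⟩, rfl⟩) (Order.lt_succ c)
    · -- no successors: vacuous Adam vertex is in Pre of anything; but arena has succ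
      obtain ⟨w, hw⟩ := A.succ v
      exact absurd ⟨w, hw⟩ hsucc

lemma Att_mono (A : Arena V) {X Y : Set V} (h : X ⊆ Y) : Att A X ⊆ Att A Y := by
  have key : ∀ o : Ordinal.{0}, stg A X o ⊆ stg A Y o := by
    intro o
    induction o using Ordinal.induction with
    | h o ih =>
      rw [stg_eq, stg_eq]
      refine Set.union_subset_union h (Pre_mono A ?_)
      exact Set.iUnion_mono fun b => ih b.1 b.2
  exact Set.iUnion_mono key

lemma compl_subarena (A : Arena V) {Z : Set V} (hZ : Pre A Z ⊆ Z) : Subarena A Zᶜ := by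
  intro v hv
  by_cases hve : v ∈ A.eve
  · obtain ⟨w, hw⟩ := A.succ v
    refine ⟨w, fun hwZ => hv (hZ (Or.inl ⟨hve, w, hw, hwZ⟩)), hw⟩
  · by_contra hno
    push_neg at hno
    refine hv (hZ (Or.inr ⟨hve, fun w hw => ?_⟩))
    by_contra hwZ
    exact hno w hwZ hw

end PFProof
namespace PFProof
open GameDefs

variable {V : Type}

/-! ### The core: closure of a winning set under strategy-consistent reachability -/

inductive Core (A : Arena V) (U : Set V) (hU : Subarena A U)
    (σ : PosStrategy (restrictArena A U hU)) (X0 : Set V) : V → Prop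
  | base (v : V) (hvU : v ∈ U) (hv : v ∈ X0) : Core A U hU σ X0 v
  | eve (v : V) (hvU : v ∈ U) (hv : Core A U hU σ X0 v) (hve : v ∈ A.eve) :
      Core A U hU σ X0 ((σ.move ⟨v, hvU⟩ : U) : V)
  | adam (v w : V) (hvU : v ∈ U) (hv : Core A U hU σ X0 v) (hva : v ∉ A.eve)
      (hw : A.edge v w) (hwU : w ∈ U) : Core A U hU σ X0 w

lemma core_subset_U {A : Arena V} {U : Set V} {hU : Subarena A U}
    {σ : PosStrategy (restrictArena A U hU)} {X0 : Set V} {v : V}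
    (h : Core A U hU σ X0 v) : v ∈ U := by
  induction h with
  | base v hvU _ => exact hvU
  | eve v hvU _ _ _ => exact (σ.move ⟨v, hvU⟩).2
  | adam v w _ _ _ _ hwU _ => exact hwU

lemma core_wins {A : Arena V} {Omega : Set (ℕ → V)} (hPI : PrefixIndependent Omega)
    {U : Set V} {hU : Subarena A U} {σ : PosStrategy (restrictArena A U hU)} {X0 : Set V}
    (hwin : ∀ v (hv : v ∈ X0) (hvU : v ∈ U),
      PosWinsFrom (restrictArena A U hU) σ (restrictCond U Omega) ⟨v, hvU⟩)
    {v : V} (h : Core A U hU σ X0 v) :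
    ∀ hvU : v ∈ U, PosWinsFrom (restrictArena A U hU) σ (restrictCond U Omega) ⟨v, hvU⟩ := by
  induction h with
  | base v hvU hv => exact fun h' => hwin v hv h'
  | eve v hvU hv hve ih =>
      intro h' ρ hplay h0 hcons
      set v' : U := ⟨v, hvU⟩
      have hmv : ρ 0 = σ.move v' := by
        rw [h0]
      set ρ' : ℕ → U := fun k => Nat.casesOn k v' ρ with hρ'
      have hplay' : IsPlay (restrictArena A U hU) ρ' := by
        intro k
        cases k with
        | zero =>
            show (restrictArena A U hU).edge v' (ρ 0)
            rw [hmv]; exact σ.legal v' hve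
        | succ k => exact hplay k
      have hcons' : PosConsistent (restrictArena A U hU) σ ρ' := by
        intro k hk
        cases k with
        | zero => exact hmv
        | succ k => exact hcons k hk
      have hmem := ih hvU ρ' hplay' rfl hcons'
      have hshift : (fun k => ((ρ' (k + 1) : U) : V)) = fun k => ((ρ k : U) : V) := rfl
      have := (hPI (fun k => ((ρ' k : U) : V))).1 hmem
      rw [hshift] at this
      exact this
  | adam v w hvU hv hva hw hwU ih =>
      intro h' ρ hplay h0 hcons
      set v' : U := ⟨v, hvU⟩
      set ρ' : ℕ → U := fun k => Nat.casesOn k v' ρ with hρ'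
      have hplay' : IsPlay (restrictArena A U hU) ρ' := by
        intro k
        cases k with
        | zero =>
            show (restrictArena A U hU).edge v' (ρ 0)
            rw [h0]; exact hw
        | succ k => exact hplay k
      have hcons' : PosConsistent (restrictArena A U hU) σ ρ' := by
        intro k hk
        cases k with
        | zero => exact absurd hk hva
        | succ k => exact hcons k hk
      have hmem := ih hvU ρ' hplay' rfl hcons'
      exact (hPI (fun k => ((ρ' k : U) : V))).1 hmem

end PFProof
namespace PFProof
open GameDefs

variable {V : Type}

/-! ### The transfinite construction -/

section Big

variable (A : Arena V) (Xi : Set V → Set V)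
  (S : ∀ U : Set V, ∀ hU : Subarena A U, PosStrategy (restrictArena A U hU))

/-- The subarena complement of the attractor of `P`. -/
def bodyU (P : Set V) : Set V := (Att A P)ᶜ

lemma bodyU_sub (P : Set V) : Subarena A (bodyU A P) :=
  compl_subarena A (pre_Att A P)

/-- The core at stage with previously won set `P`. -/
def coreOf (P : Set V) : Set V :=
  {v | Core A (bodyU A P) (bodyU_sub A P) (S (bodyU A P) (bodyU_sub A P)) (Xi (bodyU A P)) v}

/-- One step of the construction. -/
def stepW (P : Set V) : Set V := Att A (Att A P ∪ coreOf A Xi S P)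

noncomputable def bigW : Ordinal.{0} → Set V :=
  Ordinal.lt_wf.fix fun o ih => stepW A Xi S (⋃ b : Set.Iio o, ih b.1 b.2)

/-- The union of all earlier stages. -/
noncomputable def PrevW (o : Ordinal.{0}) : Set V := ⋃ b : Set.Iio o, bigW A Xi S b.1

lemma bigW_eq (o : Ordinal.{0}) : bigW A Xi S o = stepW A Xi S (PrevW A Xi S o) := by
  rw [bigW, WellFounded.fix_eq]; rfl

/-- The base set at stage `o`. -/
noncomputable def BB (o : Ordinal.{0}) : Set V :=
  Att A (PrevW A Xi S o) ∪ coreOf A Xi S (PrevW A Xi S o)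

lemma bigW_eq' (o : Ordinal.{0}) : bigW A Xi S o = Att A (BB A Xi S o) := bigW_eq A Xi S o

lemma attprev_subset_bigW (o : Ordinal.{0}) : Att A (PrevW A Xi S o) ⊆ bigW A Xi S o := by
  rw [bigW_eq' A Xi S o]
  exact subset_trans Set.subset_union_left (subset_Att A (BB A Xi S o))

lemma prev_subset_bigW (o : Ordinal.{0}) : PrevW A Xi S o ⊆ bigW A Xi S o :=
  (subset_Att A _).trans (attprev_subset_bigW A Xi S o)

lemma core_subset_bigW (o : Ordinal.{0}) :
    coreOf A Xi S (PrevW A Xi S o) ⊆ bigW A Xi S o := by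
  rw [bigW_eq' A Xi S o]
  exact subset_trans Set.subset_union_right (subset_Att A (BB A Xi S o))

lemma bigW_mono {b o : Ordinal.{0}} (h : b < o) : bigW A Xi S b ⊆ bigW A Xi S o :=
  subset_trans (Set.subset_iUnion (fun c : Set.Iio o => bigW A Xi S c.1) ⟨b, h⟩)
    (prev_subset_bigW A Xi S o)

noncomputable def stageOf (v : V) : Ordinal.{0} := sInf {o | v ∈ bigW A Xi S o}

lemma stage_mem {v : V} (hv : ∃ o, v ∈ bigW A Xi S o) : v ∈ bigW A Xi S (stageOf A Xi S v) := by
  obtain ⟨o, ho⟩ := hv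
  exact csInf_mem (s := {o | v ∈ bigW A Xi S o}) ⟨o, ho⟩

lemma stage_le {v : V} {o : Ordinal.{0}} (hv : v ∈ bigW A Xi S o) : stageOf A Xi S v ≤ o :=
  csInf_le' hv

lemma stage_not_prev {v : V} : v ∉ PrevW A Xi S (stageOf A Xi S v) := by
  intro h
  obtain ⟨b, hb⟩ := Set.mem_iUnion.1 h
  exact absurd (stage_le A Xi S hb) (not_le.2 b.2)

end Big

end PFProof
namespace PFProof
open GameDefs

variable {V : Type}

section Big

variable (A : Arena V) (Xi : Set V → Set V)
  (S : ∀ U : Set V, ∀ hU : Subarena A U, PosStrategy (restrictArena A U hU))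

open Classical in
/-- The global positional strategy. -/
noncomputable def sigG (v : V) : V :=
  if hve : v ∈ A.eve then
    if hW : ∃ o, v ∈ bigW A Xi S o then
      if hc : v ∈ coreOf A Xi S (PrevW A Xi S (stageOf A Xi S v)) then
        ((S (bodyU A (PrevW A Xi S (stageOf A Xi S v)))
            (bodyU_sub A (PrevW A Xi S (stageOf A Xi S v)))).move ⟨v, core_subset_U hc⟩ : V)
      else if hex : ∃ w, A.edge v w ∧ w ∈ Att A (PrevW A Xi S (stageOf A Xi S v)) ∧
          rnk A (PrevW A Xi S (stageOf A Xi S v)) w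
            < rnk A (PrevW A Xi S (stageOf A Xi S v)) v then
        hex.choose
      else if hex2 : ∃ w, A.edge v w ∧ w ∈ Att A (BB A Xi S (stageOf A Xi S v)) ∧
          rnk A (BB A Xi S (stageOf A Xi S v)) w
            < rnk A (BB A Xi S (stageOf A Xi S v)) v then
        hex2.choose
      else (A.succ v).choose
    else (A.succ v).choose
  else (A.succ v).choose

lemma sigG_legal (v : V) (hve : v ∈ A.eve) : A.edge v (sigG A Xi S v) := by
  unfold sigG
  rw [dif_pos hve]
  by_cases hW : ∃ o, v ∈ bigW A Xi S o
  · rw [dif_pos hW]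
    by_cases hc : v ∈ coreOf A Xi S (PrevW A Xi S (stageOf A Xi S v))
    · rw [dif_pos hc]
      exact (S _ _).legal ⟨v, core_subset_U hc⟩ hve
    · rw [dif_neg hc]
      by_cases hex : ∃ w, A.edge v w ∧ w ∈ Att A (PrevW A Xi S (stageOf A Xi S v)) ∧
          rnk A (PrevW A Xi S (stageOf A Xi S v)) w
            < rnk A (PrevW A Xi S (stageOf A Xi S v)) v
      · rw [dif_pos hex]; exact hex.choose_spec.1
      · rw [dif_neg hex]
        by_cases hex2 : ∃ w, A.edge v w ∧ w ∈ Att A (BB A Xi S (stageOf A Xi S v)) ∧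
            rnk A (BB A Xi S (stageOf A Xi S v)) w
              < rnk A (BB A Xi S (stageOf A Xi S v)) v
        · rw [dif_pos hex2]; exact hex2.choose_spec.1
        · rw [dif_neg hex2]; exact (A.succ v).choose_spec
  · rw [dif_neg hW]; exact (A.succ v).choose_spec

/-- The global positional strategy, packaged. -/
noncomputable def posG : PosStrategy A := ⟨sigG A Xi S, sigG_legal A Xi S⟩

/-- Omnibus step lemma for plays consistent with the global strategy. -/
lemma step_main {v w : V} {o : Ordinal.{0}}
    (hv : ∃ o', v ∈ bigW A Xi S o') (ho : stageOf A Xi S v = o)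
    (hedge : A.edge v w) (hcons : v ∈ A.eve → w = sigG A Xi S v) :
    stageOf A Xi S w ≤ o ∧
    ((v ∈ coreOf A Xi S (PrevW A Xi S o) ∧
        (w ∈ coreOf A Xi S (PrevW A Xi S o) ∨ w ∈ Att A (PrevW A Xi S o))) ∨
     (v ∉ coreOf A Xi S (PrevW A Xi S o) ∧ v ∈ Att A (PrevW A Xi S o) ∧
        w ∈ Att A (PrevW A Xi S o) ∧
        rnk A (PrevW A Xi S o) w < rnk A (PrevW A Xi S o) v) ∨
     (v ∉ coreOf A Xi S (PrevW A Xi S o) ∧ v ∉ Att A (PrevW A Xi S o) ∧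
        (w ∈ Att A (PrevW A Xi S o) ∨
          (w ∈ bigW A Xi S o ∧ rnk A (BB A Xi S o) w < rnk A (BB A Xi S o) v)))) := by
  subst ho
  have hvmem : v ∈ bigW A Xi S (stageOf A Xi S v) := stage_mem A Xi S hv
  have hvprev : v ∉ PrevW A Xi S (stageOf A Xi S v) := stage_not_prev A Xi S
  set o := stageOf A Xi S v with hosig
  set P := PrevW A Xi S o with hP
  by_cases hc : v ∈ coreOf A Xi S P
  · -- core case
    have h2 : w ∈ coreOf A Xi S P ∨ w ∈ Att A P := by
      by_cases hve : v ∈ A.eve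
      · have hw : w = sigG A Xi S v := hcons hve
        unfold sigG at hw
        rw [dif_pos hve, dif_pos hv, dif_pos hc] at hw
        left
        rw [hw]
        exact Core.eve v (core_subset_U hc) hc hve
      · by_cases hwU : w ∈ bodyU A P
        · exact Or.inl (Core.adam v w (core_subset_U hc) hc hve hedge hwU)
        · exact Or.inr (not_not.1 hwU)
    refine ⟨?_, Or.inl ⟨hc, h2⟩⟩
    rcases h2 with h2 | h2
    · exact stage_le A Xi S (core_subset_bigW A Xi S o h2)
    · exact stage_le A Xi S (attprev_subset_bigW A Xi S o h2)
  · by_cases hd : v ∈ Att A P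
    · -- first attractor case
      have h2 : w ∈ Att A P ∧ rnk A P w < rnk A P v := by
        by_cases hve : v ∈ A.eve
        · have hex : ∃ w', A.edge v w' ∧ w' ∈ Att A P ∧ rnk A P w' < rnk A P v :=
            step_eve A P hd hvprev hve
          have hw : w = sigG A Xi S v := hcons hve
          unfold sigG at hw
          rw [dif_pos hve, dif_pos hv, dif_neg hc, dif_pos hex] at hw
          rw [hw]
          exact ⟨hex.choose_spec.2.1, hex.choose_spec.2.2⟩
        · exact step_adam A P hd hvprev hve w hedge
      exact ⟨stage_le A Xi S (attprev_subset_bigW A Xi S o h2.1),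
        Or.inr (Or.inl ⟨hc, hd, h2⟩)⟩
    · -- second attractor case
      have hvB : v ∈ Att A (BB A Xi S o) := by
        rw [← bigW_eq' A Xi S o]; exact hvmem
      have hvnB : v ∉ BB A Xi S o := fun h => h.elim hd hc
      have h2 : w ∈ Att A P ∨ (w ∈ bigW A Xi S o ∧
          rnk A (BB A Xi S o) w < rnk A (BB A Xi S o) v) := by
        by_cases hve : v ∈ A.eve
        · have hw : w = sigG A Xi S v := hcons hve
          unfold sigG at hw
          rw [dif_pos hve, dif_pos hv, dif_neg hc] at hw
          by_cases hex : ∃ w', A.edge v w' ∧ w' ∈ Att A P ∧ rnk A P w' < rnk A P v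
          · rw [dif_pos hex] at hw
            rw [hw]
            exact Or.inl hex.choose_spec.2.1
          · have hex2 : ∃ w', A.edge v w' ∧ w' ∈ Att A (BB A Xi S o) ∧
                rnk A (BB A Xi S o) w' < rnk A (BB A Xi S o) v :=
              step_eve A (BB A Xi S o) hvB hvnB hve
            rw [dif_neg hex, dif_pos hex2] at hw
            rw [hw]
            refine Or.inr ⟨?_, hex2.choose_spec.2.2⟩
            rw [bigW_eq' A Xi S o]; exact hex2.choose_spec.2.1
        · have h := step_adam A (BB A Xi S o) hvB hvnB hve w hedge
          refine Or.inr ⟨?_, h.2⟩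
          rw [bigW_eq' A Xi S o]; exact h.1
      refine ⟨?_, Or.inr (Or.inr ⟨hc, hd, h2⟩)⟩
      rcases h2 with h2 | h2
      · exact stage_le A Xi S (attprev_subset_bigW A Xi S o h2)
      · exact stage_le A Xi S h2.1

end Big

end PFProof
namespace PFProof
open GameDefs

variable {V : Type}

lemma ord_stab (f : ℕ → Ordinal.{0}) (hf : ∀ k, f (k + 1) ≤ f k) :
    ∃ N, ∀ k, N ≤ k → f k = f N := by
  have hmono : ∀ j k, j ≤ k → f k ≤ f j := by
    intro j k h
    induction h with
    | refl => exact le_rfl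
    | step _ ih => exact le_trans (hf _) ih
  obtain ⟨a, ⟨N, rfl⟩, ha⟩ := Ordinal.lt_wf.has_min (Set.range f) ⟨f 0, 0, rfl⟩
  exact ⟨N, fun k hk => le_antisymm (hmono N k hk) (not_lt.1 (ha (f k) ⟨k, rfl⟩))⟩

lemma omega_shift {Omega : Set (ℕ → V)} (hPI : PrefixIndependent Omega) (π : ℕ → V) :
    ∀ K, (fun j => π (K + j)) ∈ Omega → π ∈ Omega := by
  intro K
  induction K with
  | zero =>
      intro h
      have e : (fun j => π (0 + j)) = π := funext fun j => by rw [Nat.zero_add]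
      rwa [e] at h
  | succ K ih =>
      intro h
      apply ih
      rw [hPI]
      have e : (fun k => (fun j => π (K + j)) (k + 1)) = (fun j => π (K + 1 + j)) :=
        funext fun k => by show π (K + (k+1)) = π (K + 1 + k); congr 1; omega
      rw [e]
      exact h

section Big

variable (A : Arena V) (Xi : Set V → Set V)
  (S : ∀ U : Set V, ∀ hU : Subarena A U, PosStrategy (restrictArena A U hU))

lemma sigG_core_eq {v : V} {o : Ordinal.{0}} (hve : v ∈ A.eve)
    (hW : ∃ o', v ∈ bigW A Xi S o') (ho : stageOf A Xi S v = o)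
    (hc : v ∈ coreOf A Xi S (PrevW A Xi S o)) :
    sigG A Xi S v = ((S (bodyU A (PrevW A Xi S o)) (bodyU_sub A (PrevW A Xi S o))).move
      ⟨v, core_subset_U hc⟩ : V) := by
  subst ho
  unfold sigG
  rw [dif_pos hve, dif_pos hW, dif_pos hc]

lemma win_from_bigW {Omega : Set (ℕ → V)} (hPI : PrefixIndependent Omega)
    (hS : ∀ (U : Set V) (hU : Subarena A U) (v : V), v ∈ Xi U → ∀ hvU : v ∈ U,
      PosWinsFrom (restrictArena A U hU) (S U hU) (restrictCond U Omega) ⟨v, hvU⟩)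
    (v : V) (hv : ∃ o, v ∈ bigW A Xi S o) : PosWinsFrom A (posG A Xi S) Omega v := by
  intro π hplay h0 hcons
  have hall : ∀ k, ∃ o, π k ∈ bigW A Xi S o := by
    intro k
    induction k with
    | zero => exact h0 ▸ hv
    | succ k ih =>
        have hst := step_main A Xi S ih rfl (hplay k) (fun hve => hcons k hve)
        rcases hst.2 with ⟨_, h2 | h2⟩ | ⟨_, _, h2, _⟩ | ⟨_, _, h2 | h2⟩
        · exact ⟨_, core_subset_bigW A Xi S _ h2⟩
        · exact ⟨_, attprev_subset_bigW A Xi S _ h2⟩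
        · exact ⟨_, attprev_subset_bigW A Xi S _ h2⟩
        · exact ⟨_, attprev_subset_bigW A Xi S _ h2⟩
        · exact ⟨_, h2.1⟩
  have hdec : ∀ k, stageOf A Xi S (π (k+1)) ≤ stageOf A Xi S (π k) := fun k =>
    (step_main A Xi S (hall k) rfl (hplay k) (fun hve => hcons k hve)).1
  obtain ⟨K₁, hK₁⟩ := ord_stab (fun k => stageOf A Xi S (π k)) hdec
  set o : Ordinal.{0} := stageOf A Xi S (π K₁) with ho
  have hconst : ∀ k, K₁ ≤ k → stageOf A Xi S (π k) = o := hK₁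
  -- after K₁ the play never visits the attractor of the previously won set
  have noC : ∀ r : Ordinal.{0}, ∀ k, K₁ ≤ k → rnk A (PrevW A Xi S o) (π k) = r →
      π k ∉ Att A (PrevW A Xi S o) := by
    intro r
    induction r using Ordinal.induction with
    | h r ih =>
      intro k hk hr hmem
      have hc : π k ∉ coreOf A Xi S (PrevW A Xi S o) := fun h => (core_subset_U h) hmem
      have hst := step_main A Xi S (hall k) (hconst k hk) (hplay k) (fun hve => hcons k hve)
      rcases hst.2 with ⟨h1, _⟩ | ⟨_, _, hmem', hlt⟩ | ⟨_, hd, _⟩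
      · exact hc h1
      · exact ih (rnk A (PrevW A Xi S o) (π (k+1))) (hr ▸ hlt) (k+1)
          (le_trans hk (Nat.le_succ k)) rfl hmem'
      · exact hd hmem
  -- the play eventually reaches the core
  have reach : ∀ r : Ordinal.{0}, ∀ k, K₁ ≤ k → rnk A (BB A Xi S o) (π k) = r →
      ∃ K₂, k ≤ K₂ ∧ π K₂ ∈ coreOf A Xi S (PrevW A Xi S o) := by
    intro r
    induction r using Ordinal.induction with
    | h r ih =>
      intro k hk hr
      by_cases hcore : π k ∈ coreOf A Xi S (PrevW A Xi S o)
      · exact ⟨k, le_rfl, hcore⟩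
      · have hst := step_main A Xi S (hall k) (hconst k hk) (hplay k) (fun hve => hcons k hve)
        rcases hst.2 with ⟨h1, _⟩ | ⟨_, hd, _⟩ | ⟨_, _, h2 | h2⟩
        · exact absurd h1 hcore
        · exact absurd hd (noC _ k hk rfl)
        · exact absurd h2 (noC _ (k+1) (le_trans hk (Nat.le_succ k)) rfl)
        · obtain ⟨K₂, hle, hc⟩ := ih (rnk A (BB A Xi S o) (π (k+1))) (hr ▸ h2.2) (k+1)
            (le_trans hk (Nat.le_succ k)) rfl
          exact ⟨K₂, le_trans (Nat.le_succ k) hle, hc⟩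
  obtain ⟨K₂, hK₂, hK₂core⟩ := reach (rnk A (BB A Xi S o) (π K₁)) K₁ le_rfl rfl
  -- from K₂ on, the play stays in the core
  have stay : ∀ j, π (K₂ + j) ∈ coreOf A Xi S (PrevW A Xi S o) := by
    intro j
    induction j with
    | zero => exact hK₂core
    | succ j ih =>
        have hk : K₁ ≤ K₂ + j := le_trans hK₂ (Nat.le_add_right K₂ j)
        have hst := step_main A Xi S (hall (K₂ + j)) (hconst (K₂ + j) hk)
          (hplay (K₂ + j)) (fun hve => hcons (K₂ + j) hve)
        rcases hst.2 with ⟨_, h2 | h2⟩ | ⟨hc, _⟩ | ⟨hc, _⟩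
        · exact h2
        · exact absurd h2 (noC _ (K₂ + j + 1) (le_trans hk (Nat.le_succ _)) rfl)
        · exact absurd ih hc
        · exact absurd ih hc
  -- the tail of the play is a play in the residual subarena consistent with the core strategy
  set U : Set V := bodyU A (PrevW A Xi S o) with hUdef
  set hU : Subarena A U := bodyU_sub A (PrevW A Xi S o) with hUs
  set ρ : ℕ → U := fun j => ⟨π (K₂ + j), core_subset_U (stay j)⟩ with hρ
  have hplay' : IsPlay (restrictArena A U hU) ρ := fun j => hplay (K₂ + j)
  have hcons' : PosConsistent (restrictArena A U hU) (S U hU) ρ := by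
    intro j hj
    have heq : π (K₂ + j + 1) = sigG A Xi S (π (K₂ + j)) := hcons (K₂ + j) hj
    rw [sigG_core_eq A Xi S hj (hall (K₂ + j))
      (hconst (K₂ + j) (le_trans hK₂ (Nat.le_add_right K₂ j))) (stay j)] at heq
    exact Subtype.ext heq
  have hwins := core_wins hPI (fun w hw hwU => hS U hU w hw hwU) (stay 0)
    (core_subset_U (stay 0))
  have hmem := hwins ρ hplay' rfl hcons'
  exact omega_shift hPI π K₂ hmem

end Big

end PFProof
namespace PFProof
open GameDefs

variable {V : Type}

section Big

variable (A : Arena V) (Xi : Set V → Set V)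
  (S : ∀ U : Set V, ∀ hU : Subarena A U, PosStrategy (restrictArena A U hU))

lemma exists_fix [Countable V] (hXi : ∀ U, Subarena A U → Xi U ⊆ U) :
    ∃ o : Ordinal.{0}, Xi (bodyU A (PrevW A Xi S o)) = ∅ := by
  by_contra h
  push_neg at h
  have hne : ∀ o : Ordinal.{0}, (Xi (bodyU A (PrevW A Xi S o))).Nonempty := h
  set f : Ordinal.{0} → V := fun o => (hne o).choose with hf
  have hmem : ∀ o, f o ∈ Xi (bodyU A (PrevW A Xi S o)) := fun o => (hne o).choose_spec
  have hU : ∀ o, f o ∈ bodyU A (PrevW A Xi S o) := fun o =>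
    hXi _ (bodyU_sub A _) (hmem o)
  have hW : ∀ o, f o ∈ bigW A Xi S o := fun o =>
    core_subset_bigW A Xi S o (Core.base _ (hU o) (hmem o))
  have key : ∀ a b : Ordinal.{0}, a < b → f a ≠ f b := by
    intro a b hab heq
    have h1 : f a ∈ Att A (PrevW A Xi S b) :=
      subset_Att A _ (Set.mem_iUnion.2 ⟨⟨a, hab⟩, hW a⟩)
    exact (hU b) (heq ▸ h1)
  have hinj : Function.Injective f := by
    intro a b heq
    by_contra hne'
    rcases lt_or_gt_of_ne hne' with hlt | hlt
    · exact key a b hlt heq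
    · exact key b a hlt heq.symm
  exact not_small_ordinal.{0} (small_of_injective hinj)

lemma WE_restrict {Omega : Set (ℕ → V)} {P : Set V} {v : V}
    (hvU : v ∈ bodyU A P) (hvW : v ∈ WE A Omega) :
    (⟨v, hvU⟩ : bodyU A P) ∈
      WE (restrictArena A (bodyU A P) (bodyU_sub A P)) (restrictCond (bodyU A P) Omega) := by
  obtain ⟨σ, hσ⟩ := hvW
  have hmove : ∀ (h : List (bodyU A P)) (u : bodyU A P), (u : V) ∈ A.eve →
      σ.move (h.map Subtype.val) u ∈ bodyU A P := by
    intro h u hu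
    intro hmem
    exact u.2 (pre_Att A P (Or.inl ⟨hu, _, σ.legal (h.map Subtype.val) u hu, hmem⟩))
  classical
  refine ⟨⟨fun h u => if hu : (u : V) ∈ A.eve then
      ⟨σ.move (h.map Subtype.val) u, hmove h u hu⟩
    else ((restrictArena A (bodyU A P) (bodyU_sub A P)).succ u).choose, ?_⟩, ?_⟩
  · intro h u hu
    show (restrictArena A (bodyU A P) (bodyU_sub A P)).edge u _
    rw [dif_pos (show (u : V) ∈ A.eve from hu)]
    exact σ.legal (h.map Subtype.val) u hu
  · intro ρ hplay h0 hcons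
    set π : ℕ → V := fun k => ((ρ k : bodyU A P) : V) with hπ
    have hplayV : IsPlay A π := fun k => hplay k
    have h0V : π 0 = v := by rw [hπ]; simp only [h0]
    have hconsV : EveConsistent A σ π := by
      intro k hk
      have h := hcons k hk
      have h' : ρ (k + 1) =
          ⟨σ.move ((hist ρ k).map Subtype.val) (ρ k), hmove _ _ hk⟩ := by
        rw [h]
        dsimp only
        rw [dif_pos (show ((ρ k : bodyU A P) : V) ∈ A.eve from hk)]
      have h2 : π (k + 1) = σ.move ((hist ρ k).map Subtype.val) (π k) :=
        congrArg (fun x : bodyU A P => (x : V)) h'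
      rw [h2]
      congr 1
      show (hist ρ k).map Subtype.val = hist π k
      simp only [hist, List.map_map]
      rfl
    exact hσ π hplayV h0V hconsV

end Big

end PFProof
open GameDefs in
/-- fixpoint lemma for positional strategies. -/
theorem stmt1 {V : Type} [Countable V] (A : Arena V) (Omega : Set (ℕ → V))
    (hBorel : IsBorelCondition Omega) (hPI : PrefixIndependent Omega)
    (Xi : Set V → Set V)
    (hXi : ∀ U, Subarena A U → Xi U ⊆ U)
    (h1 : ∀ U, ∀ hU : Subarena A U, ∀ v, ∀ hv : v ∈ Xi U,
      (⟨v, hXi U hU hv⟩ : U) ∈ WE (restrictArena A U hU) (restrictCond U Omega))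
    (h2 : ∀ U, ∀ hU : Subarena A U,
      (WE (restrictArena A U hU) (restrictCond U Omega)).Nonempty → (Xi U).Nonempty)
    (h3 : ∀ U, ∀ hU : Subarena A U, ∃ σ : PosStrategy (restrictArena A U hU),
      ∀ v, ∀ hv : v ∈ Xi U,
        PosWinsFrom (restrictArena A U hU) σ (restrictCond U Omega) ⟨v, hXi U hU hv⟩) :
    ∃ σ : PosStrategy A, ∀ v ∈ WE A Omega, PosWinsFrom A σ Omega v := by
  classical
  set S : ∀ U : Set V, ∀ hU : Subarena A U, PosStrategy (restrictArena A U hU) :=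
    fun U hU => (h3 U hU).choose with hSdef
  have hSwin : ∀ (U : Set V) (hU : Subarena A U) (v : V), v ∈ Xi U → ∀ hvU : v ∈ U,
      PosWinsFrom (restrictArena A U hU) (S U hU) (restrictCond U Omega) ⟨v, hvU⟩ := by
    intro U hU v hv hvU
    exact (h3 U hU).choose_spec v hv
  obtain ⟨oS, hfix⟩ := PFProof.exists_fix A Xi S hXi
  refine ⟨PFProof.posG A Xi S, ?_⟩
  intro v hvW
  have hvD : v ∈ PFProof.Att A (PFProof.PrevW A Xi S oS) := by
    by_contra hvU
    have hmem := PFProof.WE_restrict A (P := PFProof.PrevW A Xi S oS) hvU hvW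
    have hne := h2 _ (PFProof.bodyU_sub A (PFProof.PrevW A Xi S oS)) ⟨_, hmem⟩
    rw [hfix] at hne
    exact Set.not_nonempty_empty hne
  exact PFProof.win_from_bigW A Xi S hPI hSwin v
    ⟨oS, PFProof.attprev_subset_bigW A Xi S oS hvD⟩
end

section
/- For every arena A over a countable vertex set, every Büchi set F ⊆ V, and every N ∈ ℕ, Eve has a positional strategy that is winning from every vertex of her winning set W_E(Büchi(F,N)) for the uniform Büchi condition Büchi(F,N). -/
open Filter Set

namespace Stmt6Aux

open GameDefs OrderHom OrdinalApprox Filter Set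

variable {V : Type} (A : Arena V) (F : Set V) (N : ℕ)

attribute [local instance] Classical.propDecidable

lemma subset_attrE (k : ℕ) (X : Set V) : X ⊆ AttrE A k X := by
  induction k with
  | zero => exact le_rfl
  | succ n ih => exact ih.trans Set.subset_union_left

lemma attrE_succ (k : ℕ) (X : Set V) : AttrE A k X ⊆ AttrE A (k+1) X :=
  Set.subset_union_left

lemma attrE_steps_mono {k k' : ℕ} (h : k ≤ k') (X : Set V) :
    AttrE A k X ⊆ AttrE A k' X := by
  induction h with
  | refl => exact le_rfl
  | step h ih => exact ih.trans (attrE_succ A _ X)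

/-- The inner monotone map `X ↦ AttrE^N ((F ∩ Pre (X ∪ Y)) ∪ Y ∪ Pre Y)`. -/
def innerMap (Y : Set V) : Set V →o Set V :=
  ⟨fun X => AttrE A N ((F ∩ Pre A (X ∪ Y)) ∪ Y ∪ Pre A Y), by
    intro X X' h
    apply AttrE_mono
    apply Set.union_subset_union_left
    apply Set.union_subset_union_left
    exact Set.inter_subset_inter_right _ (Pre_mono A (Set.union_subset_union_left _ h))⟩

/-- The outer monotone map `Y ↦ gfp (innerMap Y)`. -/
def gmap : Set V →o Set V :=
  ⟨fun Y => gfp (innerMap A F N Y), by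
    intro Y Y' h
    apply le_gfp
    calc gfp (innerMap A F N Y) = innerMap A F N Y (gfp (innerMap A F N Y)) :=
          (map_gfp _).symm
      _ ≤ innerMap A F N Y' (gfp (innerMap A F N Y)) := by
          apply AttrE_mono
          refine Set.union_subset_union (Set.union_subset_union ?_ h) (Pre_mono A h)
          exact Set.inter_subset_inter_right _ (Pre_mono A (Set.union_subset_union_right _ h))⟩


/-- Eve's winning set, as a least fixed point. -/
def Wset : Set V := lfp (gmap A F N)

noncomputable def Yord (β : Ordinal) : Set V := lfpApprox (gmap A F N) ⊥ β

def Xord (β : Ordinal) : Set V := gmap A F N (Yord A F N β)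

def Tord (β : Ordinal) : Set V :=
  (F ∩ Pre A (Xord A F N β ∪ Yord A F N β)) ∪ Yord A F N β ∪ Pre A (Yord A F N β)

lemma W_fixed : gmap A F N (Wset A F N) = Wset A F N := map_lfp _

lemma Xord_eq (β : Ordinal) :
    Xord A F N β = AttrE A N (Tord A F N β) := by
  have h := map_gfp (innerMap A F N (Yord A F N β))
  exact h.symm

lemma Y_subset_W (β : Ordinal) : Yord A F N β ⊆ Wset A F N := by
  have : Wset A F N ∈ Function.fixedPoints (gmap A F N) := W_fixed A F N
  exact lfpApprox_le_of_mem_fixedPoints (f := gmap A F N) (ha := this) (hxa := bot_le) (i := β)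

lemma X_subset_W (β : Ordinal) : Xord A F N β ⊆ Wset A F N := by
  have h : Xord A F N β ≤ gmap A F N (Wset A F N) :=
    (gmap A F N).monotone (Y_subset_W A F N β)
  rw [W_fixed] at h; exact h

lemma memY {v : V} {β : Ordinal} (h : v ∈ Yord A F N β) :
    ∃ β' < β, v ∈ Xord A F N β' := by
  rw [Yord, lfpApprox] at h
  rw [bot_sup_eq] at h
  simp only [Set.iSup_eq_iUnion, Set.mem_iUnion] at h
  obtain ⟨b, hb, hv⟩ := h
  exact ⟨b, hb, hv⟩

lemma exists_stage {v : V} (h : v ∈ Wset A F N) : ∃ β, v ∈ Xord A F N β := by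
  have h2 : v ∈ Yord A F N ((Order.succ (Cardinal.mk (Set V))).ord) := by
    rw [Yord, lfpApprox_ord_eq_lfp]; exact h
  obtain ⟨β, _, hb⟩ := memY A F N h2
  exact ⟨β, hb⟩

open Classical in
/-- Outer rank. -/
noncomputable def oRank (v : V) : Ordinal :=
  if h : ∃ β, v ∈ Xord A F N β then sInf {β | v ∈ Xord A F N β} else 0

lemma oRank_mem {v : V} (h : v ∈ Wset A F N) : v ∈ Xord A F N (oRank A F N v) := by
  rw [oRank, dif_pos (exists_stage A F N h)]
  exact csInf_mem (exists_stage A F N h)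

lemma oRank_le {v : V} {β : Ordinal} (h : v ∈ Xord A F N β) : oRank A F N v ≤ β := by
  rw [oRank, dif_pos ⟨β, h⟩]
  exact csInf_le (OrderBot.bddBelow _) h

lemma oRank_lt_of_memY {w : V} {β : Ordinal} (h : w ∈ Yord A F N β) :
    oRank A F N w < β := by
  obtain ⟨β', hβ', hw⟩ := memY A F N h
  exact lt_of_le_of_lt (oRank_le A F N hw) hβ'

lemma not_memY_oRank {v : V} (h : v ∈ Wset A F N) :
    v ∉ Yord A F N (oRank A F N v) := fun hY => absurd (oRank_lt_of_memY A F N hY) (lt_irrefl _)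

open Classical in
/-- Inner rank. -/
noncomputable def rRank (v : V) : ℕ :=
  if h : ∃ n, v ∈ AttrE A n (Tord A F N (oRank A F N v)) then Nat.find h else 0

lemma rRank_mem {v : V} (h : v ∈ Wset A F N) :
    v ∈ AttrE A (rRank A F N v) (Tord A F N (oRank A F N v)) := by
  have hx : v ∈ AttrE A N (Tord A F N (oRank A F N v)) := by
    rw [← Xord_eq]; exact oRank_mem A F N h
  have hex : ∃ n, v ∈ AttrE A n (Tord A F N (oRank A F N v)) := ⟨N, hx⟩
  rw [rRank, dif_pos hex]
  exact Nat.find_spec hex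

lemma rRank_le_of_mem {v : V} {m : ℕ} (h : v ∈ AttrE A m (Tord A F N (oRank A F N v))) :
    rRank A F N v ≤ m := by
  have hex : ∃ n, v ∈ AttrE A n (Tord A F N (oRank A F N v)) := ⟨m, h⟩
  rw [rRank, dif_pos hex]
  exact Nat.find_le h

lemma rRank_le {v : V} (h : v ∈ Wset A F N) : rRank A F N v ≤ N :=
  rRank_le_of_mem A F N (by rw [← Xord_eq]; exact oRank_mem A F N h)

/-- The property a good successor `w` of `v` must have. -/
def GoodStep (v w : V) : Prop :=
  w ∈ Wset A F N ∧ oRank A F N w ≤ oRank A F N v ∧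
    (oRank A F N w = oRank A F N v →
      (rRank A F N v = 0 → v ∈ F) ∧ (rRank A F N v ≠ 0 → rRank A F N w < rRank A F N v))


lemma rRank_not_mem {v : V} {m : ℕ} (hm : m < rRank A F N v) :
    v ∉ AttrE A m (Tord A F N (oRank A F N v)) :=
  fun h => absurd (rRank_le_of_mem A F N h) (not_le.mpr hm)

lemma good_from_XY {v w : V} (hF : v ∈ F) (hr0 : rRank A F N v = 0)
    (hw : w ∈ Xord A F N (oRank A F N v) ∪ Yord A F N (oRank A F N v)) :
    GoodStep A F N v w := by
  rcases hw with hw | hw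
  · exact ⟨X_subset_W A F N _ hw, oRank_le A F N hw,
      fun _ => ⟨fun _ => hF, fun h0 => absurd hr0 h0⟩⟩
  · exact ⟨Y_subset_W A F N _ hw, (oRank_lt_of_memY A F N hw).le,
      fun heq => absurd heq (ne_of_lt (oRank_lt_of_memY A F N hw))⟩

lemma good_from_Y {v w : V} (hw : w ∈ Yord A F N (oRank A F N v)) :
    GoodStep A F N v w :=
  ⟨Y_subset_W A F N _ hw, (oRank_lt_of_memY A F N hw).le,
    fun heq => absurd heq (ne_of_lt (oRank_lt_of_memY A F N hw))⟩

lemma good_from_attr {v w : V} (hv : v ∈ Wset A F N) {r' : ℕ}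
    (hr : rRank A F N v = r' + 1)
    (hw : w ∈ AttrE A r' (Tord A F N (oRank A F N v))) :
    GoodStep A F N v w := by
  have hrN : r' + 1 ≤ N := hr ▸ rRank_le A F N hv
  have hwX : w ∈ Xord A F N (oRank A F N v) := by
    rw [Xord_eq]
    exact attrE_steps_mono A (Nat.le_of_succ_le hrN) _ hw
  refine ⟨X_subset_W A F N _ hwX, oRank_le A F N hwX, fun heq => ⟨?_, fun _ => ?_⟩⟩
  · intro h0; rw [h0] at hr; exact absurd hr (by simp)
  · have : w ∈ AttrE A r' (Tord A F N (oRank A F N w)) := by rw [heq]; exact hw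
    calc rRank A F N w ≤ r' := rRank_le_of_mem A F N this
      _ < r' + 1 := Nat.lt_succ_self _
      _ = rRank A F N v := hr.symm

lemma key {v : V} (hv : v ∈ Wset A F N) :
    (v ∈ A.eve → ∃ w, A.edge v w ∧ GoodStep A F N v w) ∧
    (v ∉ A.eve → ∀ w, A.edge v w → GoodStep A F N v w) := by
  have hT := rRank_mem A F N hv
  have hnotY := not_memY_oRank A F N hv
  rcases hr : rRank A F N v with _ | r'
  · rw [hr] at hT
    rcases (hT : v ∈ Tord A F N _) with (hv1 | hv2) | hv3
    · -- v ∈ F ∩ Pre (X ∪ Y)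
      rcases hv1.2 with ⟨heve, w, hew, hw⟩ | ⟨hnev, hall⟩
      · exact ⟨fun _ => ⟨w, hew, good_from_XY A F N hv1.1 hr hw⟩,
          fun hne => absurd heve hne⟩
      · exact ⟨fun hev => absurd hev hnev,
          fun _ w hew => good_from_XY A F N hv1.1 hr (hall w hew)⟩
    · exact absurd hv2 hnotY
    · rcases hv3 with ⟨heve, w, hew, hw⟩ | ⟨hnev, hall⟩
      · exact ⟨fun _ => ⟨w, hew, good_from_Y A F N hw⟩, fun hne => absurd heve hne⟩
      · exact ⟨fun hev => absurd hev hnev,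
          fun _ w hew => good_from_Y A F N (hall w hew)⟩
  · rw [hr] at hT
    have hnot : v ∉ AttrE A r' (Tord A F N (oRank A F N v)) :=
      rRank_not_mem A F N (by rw [hr]; exact Nat.lt_succ_self _)
    rcases (hT : v ∈ AttrE A r' _ ∪ Pre A (AttrE A r' _)) with h | hPre
    · exact absurd h hnot
    · rcases hPre with ⟨heve, w, hew, hw⟩ | ⟨hnev, hall⟩
      · exact ⟨fun _ => ⟨w, hew, good_from_attr A F N hv hr hw⟩,
          fun hne => absurd heve hne⟩
      · exact ⟨fun hev => absurd hev hnev,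
          fun _ w hew => good_from_attr A F N hv hr (hall w hew)⟩

/-- The positional strategy. -/
noncomputable def posStr : PosStrategy A := by
  refine ⟨fun v =>
    if h : v ∈ A.eve ∧ v ∈ Wset A F N then Classical.choose ((key A F N h.2).1 h.1)
    else Classical.choose (A.succ v), ?_⟩
  intro v hev
  by_cases h : v ∈ A.eve ∧ v ∈ Wset A F N
  · rw [dif_pos h]; exact (Classical.choose_spec ((key A F N h.2).1 h.1)).1
  · rw [dif_neg h]; exact Classical.choose_spec (A.succ v)

lemma posStr_good {v : V} (hv : v ∈ Wset A F N) (hev : v ∈ A.eve) :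
    GoodStep A F N v ((posStr A F N).move v) := by
  have h : v ∈ A.eve ∧ v ∈ Wset A F N := ⟨hev, hv⟩
  show GoodStep A F N v (if h : v ∈ A.eve ∧ v ∈ Wset A F N
      then Classical.choose ((key A F N h.2).1 h.1) else Classical.choose (A.succ v))
  rw [dif_pos h]
  exact (Classical.choose_spec ((key A F N h.2).1 h.1)).2


section Soundness

variable {A F N}

lemma play_step {π : ℕ → V} (hπ : IsPlay A π)
    (hcons : PosConsistent A (posStr A F N) π) {k : ℕ} (hk : π k ∈ Wset A F N) :
    GoodStep A F N (π k) (π (k+1)) := by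
  by_cases hev : π k ∈ A.eve
  · rw [hcons k hev]; exact posStr_good A F N hk hev
  · exact (key A F N hk).2 hev _ (hπ k)

lemma play_mem {π : ℕ → V} (hπ : IsPlay A π)
    (hcons : PosConsistent A (posStr A F N) π) (h0 : π 0 ∈ Wset A F N) :
    ∀ k, π k ∈ Wset A F N := by
  intro k
  induction k with
  | zero => exact h0
  | succ n ih => exact (play_step hπ hcons ih).1

lemma play_o_antitone {π : ℕ → V} (hπ : IsPlay A π)
    (hcons : PosConsistent A (posStr A F N) π) (h0 : π 0 ∈ Wset A F N) :
    ∀ k l, k ≤ l → oRank A F N (π l) ≤ oRank A F N (π k) := by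
  intro k l hkl
  induction hkl with
  | refl => exact le_rfl
  | step h ih =>
      exact le_trans (play_step hπ hcons (play_mem hπ hcons h0 _)).2.1 ih

lemma play_o_stable {π : ℕ → V} (hπ : IsPlay A π)
    (hcons : PosConsistent A (posStr A F N) π) (h0 : π 0 ∈ Wset A F N) :
    ∃ K, ∀ k, K ≤ k → oRank A F N (π k) = oRank A F N (π K) := by
  obtain ⟨m, ⟨K, hK⟩, hmin⟩ := Ordinal.lt_wf.has_min
    {α | ∃ k, oRank A F N (π k) = α} ⟨_, 0, rfl⟩
  refine ⟨K, fun k hk => ?_⟩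
  have h1 : oRank A F N (π k) ≤ oRank A F N (π K) :=
    play_o_antitone hπ hcons h0 K k hk
  have h2 : ¬ oRank A F N (π k) < m := hmin _ ⟨k, rfl⟩
  rw [← hK] at h2
  exact le_antisymm h1 (not_lt.mp h2)

lemma play_reach_F {π : ℕ → V} (hπ : IsPlay A π)
    (hcons : PosConsistent A (posStr A F N) π) (h0 : π 0 ∈ Wset A F N)
    {K : ℕ} (hst : ∀ k, K ≤ k → oRank A F N (π k) = oRank A F N (π K)) :
    ∀ n k, K ≤ k → rRank A F N (π k) ≤ n → ∃ j, j ≤ n ∧ π (k + j) ∈ F := by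
  intro n
  induction n with
  | zero =>
      intro k hk hr
      have hg := play_step hπ hcons (play_mem hπ hcons h0 k)
      have heq : oRank A F N (π (k+1)) = oRank A F N (π k) := by
        rw [hst k hk, hst (k+1) (le_trans hk (Nat.le_succ k))]
      exact ⟨0, le_rfl, (hg.2.2 heq).1 (Nat.le_zero.mp hr)⟩
  | succ n ih =>
      intro k hk hr
      have hg := play_step hπ hcons (play_mem hπ hcons h0 k)
      have heq : oRank A F N (π (k+1)) = oRank A F N (π k) := by
        rw [hst k hk, hst (k+1) (le_trans hk (Nat.le_succ k))]
      by_cases hr0 : rRank A F N (π k) = 0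
      · exact ⟨0, Nat.zero_le _, (hg.2.2 heq).1 hr0⟩
      · have hlt : rRank A F N (π (k+1)) < rRank A F N (π k) := (hg.2.2 heq).2 hr0
        obtain ⟨j, hj, hF⟩ := ih (k+1) (le_trans hk (Nat.le_succ k))
          (by omega)
        exact ⟨j + 1, by omega, by rw [show k + (j+1) = (k+1) + j by omega]; exact hF⟩

lemma distB_le_of_exists {π : ℕ → V} {k n : ℕ} (h : ∃ j, j ≤ n ∧ π (k + j) ∈ F) :
    distB π F k ≤ (n : ℕ∞) := by
  obtain ⟨j, hj, hF⟩ := h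
  refine le_trans (sInf_le ⟨j, hF, rfl⟩) ?_
  exact_mod_cast Nat.cast_le.mpr hj

lemma sound : ∀ v ∈ Wset A F N, PosWinsFrom A (posStr A F N) (UnifBuchi F N) v := by
  intro v hv π hπ hv0 hcons
  have h0 : π 0 ∈ Wset A F N := hv0 ▸ hv
  obtain ⟨K, hst⟩ := play_o_stable hπ hcons h0
  show limsup (fun k => distB π F k) atTop ≤ (N : ℕ∞)
  refine limsup_le_of_le (by isBoundedDefault) ?_
  rw [eventually_atTop]
  refine ⟨K, fun k hk => ?_⟩
  exact distB_le_of_exists (play_reach_F hπ hcons h0 hst N k hk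
    (rRank_le A F N (play_mem hπ hcons h0 k)))

end Soundness


section Completeness

/-- The complement of `Wset`. -/
def Uset : Set V := (Wset A F N)ᶜ

lemma preW_subset : Pre A (Wset A F N) ⊆ Wset A F N := by
  have h1 : gfp (innerMap A F N (Wset A F N)) = Wset A F N := W_fixed A F N
  have hW := map_gfp (innerMap A F N (Wset A F N))
  rw [h1] at hW
  replace hW : Wset A F N =
      AttrE A N ((F ∩ Pre A (Wset A F N ∪ Wset A F N)) ∪ Wset A F N ∪
        Pre A (Wset A F N)) := hW.symm
  intro u hu
  rw [hW]
  exact subset_attrE A N _ (Or.inr hu)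

lemma trapE {u w : V} (hu : u ∈ Uset A F N) (hev : u ∈ A.eve) (hw : A.edge u w) :
    w ∈ Uset A F N := by
  intro hwW
  exact hu (preW_subset A F N (Or.inl ⟨hev, w, hw, hwW⟩))

lemma trapA {u : V} (hu : u ∈ Uset A F N) (hev : u ∉ A.eve) :
    ∃ w, A.edge u w ∧ w ∈ Uset A F N := by
  by_contra h
  push_neg at h
  exact hu (preW_subset A F N (Or.inr ⟨hev, fun w hw => not_not.mp (h w hw)⟩))

/-- One-step predecessor operator for Eve in the subgame on `Uset`. -/
def PreU (X : Set V) : Set V :=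
  {u | (u ∈ A.eve ∧ ∃ w, A.edge u w ∧ w ∈ X) ∨
       (u ∉ A.eve ∧ ∀ w, A.edge u w → w ∈ Uset A F N → w ∈ X)}

lemma PreU_mono : Monotone (PreU A F N) := by
  intro X Y h u hu
  rcases hu with ⟨he, w, hw, hwX⟩ | ⟨ha, hall⟩
  · exact Or.inl ⟨he, w, hw, h hwX⟩
  · exact Or.inr ⟨ha, fun w hw hwU => h (hall w hw hwU)⟩

/-- Bounded attractor in the subgame on `Uset`. -/
def AttrEU : ℕ → Set V → Set V
  | 0, X => X
  | k + 1, X => AttrEU k X ∪ PreU A F N (AttrEU k X)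

lemma AttrEU_mono (k : ℕ) : Monotone (AttrEU A F N k) := by
  induction k with
  | zero => intro X Y h; exact h
  | succ n ih =>
      intro X Y h
      exact Set.union_subset_union (ih h) (PreU_mono A F N (ih h))

lemma subset_attrEU (k : ℕ) (X : Set V) : X ⊆ AttrEU A F N k X := by
  induction k with
  | zero => exact le_rfl
  | succ n ih => exact ih.trans Set.subset_union_left

def h0map : Set V →o Set V :=
  ⟨fun X => AttrEU A F N N (F ∩ PreU A F N X), fun X Y h =>
    AttrEU_mono A F N N (Set.inter_subset_inter_right _ (PreU_mono A F N h))⟩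

def XUset : Set V := gfp (h0map A F N)

lemma preU_subset (X : Set V) : PreU A F N X ⊆ Pre A (X ∪ Wset A F N) := by
  intro u hu
  rcases hu with ⟨he, w, hw, hwX⟩ | ⟨ha, hall⟩
  · exact Or.inl ⟨he, w, hw, Or.inl hwX⟩
  · refine Or.inr ⟨ha, fun w hw => ?_⟩
    by_cases hwW : w ∈ Wset A F N
    · exact Or.inr hwW
    · exact Or.inl (hall w hw hwW)

lemma attrEU_subset (k : ℕ) (S : Set V) :
    AttrEU A F N k S ⊆ AttrE A k (S ∪ Wset A F N) := by
  induction k with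
  | zero => exact Set.subset_union_left
  | succ n ih =>
      intro u hu
      rcases hu with hu | hu
      · exact attrE_succ A n _ (ih hu)
      · refine Or.inr ?_
        have h1 : PreU A F N (AttrEU A F N n S) ⊆
            Pre A (AttrEU A F N n S ∪ Wset A F N) := preU_subset A F N _
        have h2 : AttrEU A F N n S ∪ Wset A F N ⊆ AttrE A n (S ∪ Wset A F N) := by
          refine Set.union_subset ih ?_
          exact fun w hw => subset_attrE A n _ (Or.inr hw)
        exact Pre_mono A h2 (h1 hu)

lemma XU_subset_W : XUset A F N ⊆ Wset A F N := by
  have hfix : XUset A F N = AttrEU A F N N (F ∩ PreU A F N (XUset A F N)) :=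
    (map_gfp (h0map A F N)).symm
  have h1 : XUset A F N ⊆ innerMap A F N (Wset A F N) (XUset A F N) := by
    refine hfix.le.trans ((attrEU_subset A F N N _).trans (AttrE_mono A N ?_))
    rintro u (⟨huF, huP⟩ | huW)
    · exact Or.inl (Or.inl ⟨huF, preU_subset A F N _ huP⟩)
    · exact Or.inl (Or.inr huW)
  have h2 : XUset A F N ≤ gfp (innerMap A F N (Wset A F N)) := le_gfp _ h1
  have h3 : gfp (innerMap A F N (Wset A F N)) = Wset A F N := W_fixed A F N
  rw [← h3]; exact h2

noncomputable def Zord (α : Ordinal) : Set V := gfpApprox (h0map A F N) ⊤ α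

lemma XU_subset_Z (α : Ordinal) : XUset A F N ⊆ Zord A F N α :=
  le_gfpApprox_of_mem_fixedPoints (f := h0map A F N) (ha := map_gfp (h0map A F N)) (hax := le_top) (i := α)

lemma exists_not_Z {u : V} (hu : u ∉ XUset A F N) : ∃ α, u ∉ Zord A F N α := by
  refine ⟨(Order.succ (Cardinal.mk (Set V))).ord, fun h => hu ?_⟩
  rwa [Zord, gfpApprox_ord_eq_gfp] at h

open Classical in
/-- Adam's rank on the complement of `XUset`. -/
noncomputable def rho (u : V) : Ordinal :=
  if h : ∃ α, u ∉ Zord A F N α then sInf {α | u ∉ Zord A F N α} else 0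

lemma rho_spec {u : V} (hu : u ∉ XUset A F N) : u ∉ Zord A F N (rho A F N u) := by
  rw [rho, dif_pos (exists_not_Z A F N hu)]
  exact csInf_mem (exists_not_Z A F N hu)

lemma rho_le {u : V} {b : Ordinal} (h : u ∉ Zord A F N b) : rho A F N u ≤ b := by
  rw [rho, dif_pos ⟨b, h⟩]
  exact csInf_le (OrderBot.bddBelow _) h

lemma rho_unfold {u : V} (hu : u ∉ XUset A F N) :
    ∃ b < rho A F N u, u ∉ h0map A F N (Zord A F N b) := by
  have h := rho_spec A F N hu
  rw [Zord, gfpApprox] at h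
  rw [top_inf_eq] at h
  simp only [Set.iInf_eq_iInter, Set.mem_iInter, not_forall] at h
  obtain ⟨b, hb, hut⟩ := h
  exact ⟨b, hb, hut⟩


variable [Inhabited V] (sig : EveStrategy A)

def FinPlay (l : List V) : Prop :=
  ∀ i, i + 1 < l.length → A.edge (l.getD i default) (l.getD (i+1) default)

def FinCons (l : List V) : Prop :=
  ∀ i, i + 1 < l.length → l.getD i default ∈ A.eve →
    l.getD (i+1) default = sig.move (l.take i) (l.getD i default)

omit [Inhabited V] in
lemma getD_append_lt {l e : List V} {i : ℕ} (h : i < l.length) (d : V) :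
    (l ++ e).getD i d = l.getD i d := by
  rw [List.getD_eq_getElem?_getD, List.getD_eq_getElem?_getD, List.getElem?_append_left h]

omit [Inhabited V] in
lemma getD_append_len (l : List V) (w d : V) : (l ++ [w]).getD l.length d = w := by
  rw [List.getD_eq_getElem?_getD, List.getElem?_append_right le_rfl]; simp

omit [Inhabited V] in
lemma getLastD_eq {l : List V} (hne : l ≠ []) (d : V) :
    l.getLastD d = l.getD (l.length - 1) d := by
  rw [List.getLastD_eq_getLast?, List.getLast?_eq_getElem?, List.getD_eq_getElem?_getD]

omit [Inhabited V] in
lemma getLastD_concat' (l : List V) (w d : V) : (l ++ [w]).getLastD d = w := by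
  simp [List.getLastD_eq_getLast?]

lemma ext_one {l : List V} (hne : l ≠ []) (hp : FinPlay A l) (hc : FinCons A sig l) {w : V}
    (hw : A.edge (l.getLastD default) w)
    (hcw : l.getLastD default ∈ A.eve → w = sig.move l.dropLast (l.getLastD default)) :
    FinPlay A (l ++ [w]) ∧ FinCons A sig (l ++ [w]) := by
  have hlen : (l ++ [w]).length = l.length + 1 := by simp
  have hl1 : 1 ≤ l.length := List.length_pos_iff.mpr hne
  constructor
  · intro i hi
    rw [hlen] at hi
    by_cases hi' : i + 1 < l.length
    · rw [getD_append_lt (Nat.lt_of_succ_lt hi') _, getD_append_lt hi' _]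
      exact hp i hi'
    · have hieq : i + 1 = l.length := by omega
      have h1 : (l ++ [w]).getD i default = l.getLastD default := by
        rw [getD_append_lt (by omega) _, getLastD_eq hne]
        congr 1; omega
      have h2 : (l ++ [w]).getD (i+1) default = w := by
        rw [hieq]; exact getD_append_len l w default
      rw [h1, h2]
      exact hw
  · intro i hi hev
    rw [hlen] at hi
    by_cases hi' : i + 1 < l.length
    · rw [getD_append_lt (Nat.lt_of_succ_lt hi') _, getD_append_lt hi' _,
        List.take_append_of_le_length (by omega)]
      rw [getD_append_lt (Nat.lt_of_succ_lt hi') _] at hev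
      exact hc i hi' hev
    · have hieq : i + 1 = l.length := by omega
      have h1 : (l ++ [w]).getD i default = l.getLastD default := by
        rw [getD_append_lt (by omega) _, getLastD_eq hne]
        congr 1; omega
      have h2 : (l ++ [w]).getD (i+1) default = w := by
        rw [hieq]; exact getD_append_len l w default
      rw [h1, h2]
      rw [h1] at hev
      rw [List.take_append_of_le_length (by omega),
        show l.take i = l.dropLast by rw [List.dropLast_eq_take]; congr 1; omega]
      exact hcw hev

lemma advance {l : List V} (hne : l ≠ []) (hp : FinPlay A l) (hc : FinCons A sig l)
    (hu : l.getLastD default ∈ Uset A F N) (Q : Set V)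
    (hQe : l.getLastD default ∈ A.eve → ∀ w, A.edge (l.getLastD default) w → w ∈ Q)
    (hQa : l.getLastD default ∉ A.eve →
      ∃ w, A.edge (l.getLastD default) w ∧ w ∈ Uset A F N ∧ w ∈ Q) :
    ∃ w, w ∈ Uset A F N ∧ w ∈ Q ∧ FinPlay A (l ++ [w]) ∧ FinCons A sig (l ++ [w]) := by
  by_cases hev : l.getLastD default ∈ A.eve
  · set w := sig.move l.dropLast (l.getLastD default) with hwdef
    have hw : A.edge (l.getLastD default) w := sig.legal _ _ hev
    obtain ⟨h1, h2⟩ := ext_one A sig hne hp hc hw (fun _ => rfl)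
    exact ⟨w, trapE A F N hu hev hw, hQe hev w hw, h1, h2⟩
  · obtain ⟨w, hw, hwU, hwQ⟩ := hQa hev
    obtain ⟨h1, h2⟩ := ext_one A sig hne hp hc hw (fun h => absurd h hev)
    exact ⟨w, hwU, hwQ, h1, h2⟩

lemma not_preU_step {u : V} (X : Set V) (hu : u ∉ PreU A F N X) :
    (u ∈ A.eve → ∀ w, A.edge u w → w ∉ X) ∧
    (u ∉ A.eve → ∃ w, A.edge u w ∧ w ∈ Uset A F N ∧ w ∉ X) := by
  rw [PreU, Set.mem_setOf_eq, not_or] at hu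
  obtain ⟨h1, h2⟩ := hu
  constructor
  · intro hev w hw hwX
    exact h1 ⟨hev, w, hw, hwX⟩
  · intro hev
    push_neg at h2
    exact h2 hev

lemma walk (b : Ordinal) : ∀ (k : ℕ) (l : List V), l ≠ [] → FinPlay A l →
    FinCons A sig l → l.getLastD default ∈ Uset A F N →
    l.getLastD default ∉ AttrEU A F N k (F ∩ PreU A F N (Zord A F N b)) →
    ∃ e : List V, FinPlay A (l ++ e) ∧ FinCons A sig (l ++ e) ∧
      (l ++ e).getLastD default ∈ Uset A F N ∧
      ((e.length = k ∧ ∀ j ≤ k, (l ++ e).getD (l.length - 1 + j) default ∉ F) ∨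
        (l ++ e).getLastD default ∉ Zord A F N b) := by
  intro k
  induction k with
  | zero =>
      intro l hne hp hc hu hatt
      by_cases hF : l.getLastD default ∈ F
      · have hnP : l.getLastD default ∉ PreU A F N (Zord A F N b) :=
          fun h => hatt ⟨hF, h⟩
        obtain ⟨hQe, hQa⟩ := not_preU_step A F N _ hnP
        obtain ⟨w, hwU, hwZ, h1, h2⟩ := advance A F N sig hne hp hc hu _ hQe hQa
        refine ⟨[w], h1, h2, ?_, Or.inr ?_⟩ <;> rw [getLastD_concat'] <;> assumption
      · refine ⟨[], by simpa using hp, by simpa using hc, by simpa using hu, Or.inl ⟨rfl, ?_⟩⟩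
        intro j hj
        interval_cases j
        simp only [List.append_nil, Nat.add_zero]
        rw [← getLastD_eq hne]
        exact hF
  | succ k ih =>
      intro l hne hp hc hu hatt
      rw [show AttrEU A F N (k+1) (F ∩ PreU A F N (Zord A F N b)) =
          AttrEU A F N k (F ∩ PreU A F N (Zord A F N b)) ∪
          PreU A F N (AttrEU A F N k (F ∩ PreU A F N (Zord A F N b))) from rfl] at hatt
      rw [Set.mem_union, not_or] at hatt
      obtain ⟨hatt1, hatt2⟩ := hatt
      have hnT : l.getLastD default ∉ F ∩ PreU A F N (Zord A F N b) :=
        fun h => hatt1 (subset_attrEU A F N k _ h)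
      by_cases hF : l.getLastD default ∈ F
      · have hnP : l.getLastD default ∉ PreU A F N (Zord A F N b) :=
          fun h => hnT ⟨hF, h⟩
        obtain ⟨hQe, hQa⟩ := not_preU_step A F N _ hnP
        obtain ⟨w, hwU, hwZ, h1, h2⟩ := advance A F N sig hne hp hc hu _ hQe hQa
        refine ⟨[w], h1, h2, ?_, Or.inr ?_⟩ <;> rw [getLastD_concat'] <;> assumption
      · obtain ⟨hQe, hQa⟩ := not_preU_step A F N _ hatt2
        obtain ⟨w, hwU, hwA, h1, h2⟩ := advance A F N sig hne hp hc hu _ hQe hQa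
        have hne' : l ++ [w] ≠ [] := fun hh => hne (List.append_eq_nil_iff.mp hh).1
        have hlast' : (l ++ [w]).getLastD default = w := getLastD_concat' l w default
        obtain ⟨e', hp', hc', hU', hcase⟩ := ih (l ++ [w]) hne' h1 h2
          (by rw [hlast']; exact hwU) (by rw [hlast']; exact hwA)
        have hassoc : l ++ (w :: e') = (l ++ [w]) ++ e' := by simp
        have hl1 : 1 ≤ l.length := List.length_pos_iff.mpr hne
        refine ⟨w :: e', by rw [hassoc]; exact hp', by rw [hassoc]; exact hc',
          by rw [hassoc]; exact hU', ?_⟩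
        rcases hcase with ⟨hlen, hwin⟩ | hZ
        · refine Or.inl ⟨by simp [hlen], ?_⟩
          intro j hj
          rcases j with _ | j'
          · rw [hassoc, getD_append_lt (by simp) _, getD_append_lt (by omega) _,
              Nat.add_zero, ← getLastD_eq hne]
            exact hF
          · have : l.length - 1 + (j' + 1) = (l ++ [w]).length - 1 + j' := by
              simp; omega
            rw [hassoc, this]
            exact hwin j' (by omega)
        · exact Or.inr (by rw [hassoc]; exact hZ)


lemma block : ∀ (α : Ordinal) (l : List V), l ≠ [] → FinPlay A l → FinCons A sig l →
    l.getLastD default ∈ Uset A F N → rho A F N (l.getLastD default) = α →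
    ∃ e, e ≠ [] ∧ FinPlay A (l ++ e) ∧ FinCons A sig (l ++ e) ∧
      (l ++ e).getLastD default ∈ Uset A F N ∧
      ∃ q, l.length - 1 ≤ q ∧ q + N + 1 ≤ (l ++ e).length ∧
        ∀ j ≤ N, (l ++ e).getD (q + j) default ∉ F := by
  intro α
  induction α using Ordinal.induction with
  | h α IH =>
    intro l hne hp hc hu hρ
    have hl1 : 1 ≤ l.length := List.length_pos_iff.mpr hne
    have hXU : l.getLastD default ∉ XUset A F N :=
      fun h => hu (XU_subset_W A F N h)
    obtain ⟨b, hb, hnb⟩ := rho_unfold A F N hXU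
    rw [hρ] at hb
    have hnb' : l.getLastD default ∉
        AttrEU A F N N (F ∩ PreU A F N (Zord A F N b)) := hnb
    obtain ⟨e, hp', hc', hU', hcase⟩ := walk A F N sig b N l hne hp hc hu hnb'
    rcases hcase with ⟨hlen, hwin⟩ | hZ
    · -- window found; append one extra step to make the block nonempty
      have hne' : l ++ e ≠ [] := fun hh => hne (List.append_eq_nil_iff.mp hh).1
      obtain ⟨w, hwU, _, h1, h2⟩ := advance A F N sig hne' hp' hc' hU'
        Set.univ (fun _ w _ => Set.mem_univ w)
        (fun hev => by
          obtain ⟨w, hw, hwU⟩ := trapA A F N hU' hev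
          exact ⟨w, hw, hwU, Set.mem_univ w⟩)
      have hassoc : l ++ (e ++ [w]) = (l ++ e) ++ [w] := by simp
      refine ⟨e ++ [w], by simp, by rw [hassoc]; exact h1, by rw [hassoc]; exact h2,
        by rw [hassoc, getLastD_concat']; exact hwU, l.length - 1, le_rfl, ?_, ?_⟩
      · have : (l ++ (e ++ [w])).length = l.length + N + 1 := by simp [hlen]; omega
        omega
      · intro j hj
        have hjlt : l.length - 1 + j < (l ++ e).length := by simp [hlen]; omega
        rw [hassoc, getD_append_lt hjlt _]
        exact hwin j hj
    · -- rank decreased; recurse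
      have hne' : l ++ e ≠ [] := fun hh => hne (List.append_eq_nil_iff.mp hh).1
      have hρ' : rho A F N ((l ++ e).getLastD default) < α :=
        lt_of_le_of_lt (rho_le A F N hZ) hb
      obtain ⟨e', hene', hp'', hc'', hU'', q, hq1, hq2, hwin⟩ :=
        IH _ hρ' (l ++ e) hne' hp' hc' hU' rfl
      have hassoc : l ++ (e ++ e') = (l ++ e) ++ e' := by simp
      refine ⟨e ++ e', fun hh => hene' (List.append_eq_nil_iff.mp hh).2,
        by rw [hassoc]; exact hp'', by rw [hassoc]; exact hc'',
        by rw [hassoc]; exact hU'', q, ?_, by rw [hassoc]; exact hq2, ?_⟩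
      · refine le_trans ?_ hq1
        simp only [List.length_append]
        omega
      · intro j hj
        rw [hassoc]
        exact hwin j hj


def PP (l : List V) : Prop :=
  l ≠ [] ∧ FinPlay A l ∧ FinCons A sig l ∧ l.getLastD default ∈ Uset A F N

def BSpec (l e : List V) : Prop :=
  e ≠ [] ∧ PP A F N sig (l ++ e) ∧
    ∃ q, l.length - 1 ≤ q ∧ q + N + 1 ≤ (l ++ e).length ∧
      ∀ j ≤ N, (l ++ e).getD (q + j) default ∉ F

lemma blockPP {l : List V} (h : PP A F N sig l) : ∃ e, BSpec A F N sig l e := by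
  obtain ⟨hne, hp, hc, hu⟩ := h
  obtain ⟨e, hene, hp', hc', hU', q, hq⟩ :=
    block A F N sig _ l hne hp hc hu rfl
  exact ⟨e, hene, ⟨fun hh => hne (List.append_eq_nil_iff.mp hh).1, hp', hc', hU'⟩, q, hq⟩

variable (v0 : V) (h0 : PP A F N sig [v0])

noncomputable def chain : ℕ → {l : List V // PP A F N sig l}
  | 0 => ⟨[v0], h0⟩
  | n+1 => ⟨(chain n).1 ++ Classical.choose (blockPP A F N sig (chain n).2),
      (Classical.choose_spec (blockPP A F N sig (chain n).2)).2.1⟩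

lemma chain_spec (n : ℕ) :
    BSpec A F N sig (chain A F N sig v0 h0 n).1
      (Classical.choose (blockPP A F N sig (chain A F N sig v0 h0 n).2)) :=
  Classical.choose_spec (blockPP A F N sig (chain A F N sig v0 h0 n).2)

lemma chain_succ (n : ℕ) :
    (chain A F N sig v0 h0 (n+1)).1 = (chain A F N sig v0 h0 n).1 ++
      Classical.choose (blockPP A F N sig (chain A F N sig v0 h0 n).2) := rfl

lemma chain_prefix {n m : ℕ} (h : n ≤ m) :
    (chain A F N sig v0 h0 n).1 <+: (chain A F N sig v0 h0 m).1 := by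
  induction h with
  | refl => exact List.prefix_rfl
  | step h ih => exact ih.trans ⟨_, (chain_succ A F N sig v0 h0 _).symm⟩

lemma chain_len (n : ℕ) : n + 1 ≤ (chain A F N sig v0 h0 n).1.length := by
  induction n with
  | zero => simp [chain]
  | succ n ih =>
      have h1 : 1 ≤ (Classical.choose (blockPP A F N sig (chain A F N sig v0 h0 n).2)).length :=
        List.length_pos_iff.mpr (chain_spec A F N sig v0 h0 n).1
      rw [chain_succ, List.length_append]
      omega

noncomputable def playOf : ℕ → V :=
  fun k => (chain A F N sig v0 h0 (k+1)).1.getD k default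

lemma playOf_eq {n k : ℕ} (hk : k < (chain A F N sig v0 h0 n).1.length) :
    (chain A F N sig v0 h0 n).1.getD k default = playOf A F N sig v0 h0 k := by
  rcases le_total n (k+1) with h | h
  · obtain ⟨t, ht⟩ := chain_prefix A F N sig v0 h0 h
    rw [playOf, ← ht, getD_append_lt hk]
  · obtain ⟨t, ht⟩ := chain_prefix A F N sig v0 h0 h
    have hk2 : k < (chain A F N sig v0 h0 (k+1)).1.length := by
      have := chain_len A F N sig v0 h0 (k+1); omega
    rw [playOf, ← ht, getD_append_lt hk2]

lemma playOf_isPlay : IsPlay A (playOf A F N sig v0 h0) := by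
  intro k
  have hlen := chain_len A F N sig v0 h0 (k+2)
  have h1 : k < (chain A F N sig v0 h0 (k+2)).1.length := by omega
  have h2 : k + 1 < (chain A F N sig v0 h0 (k+2)).1.length := by omega
  rw [← playOf_eq A F N sig v0 h0 h1, ← playOf_eq A F N sig v0 h0 h2]
  exact (chain A F N sig v0 h0 (k+2)).2.2.1 k h2

lemma take_eq_hist (n k : ℕ) (hk : k ≤ (chain A F N sig v0 h0 n).1.length) :
    (chain A F N sig v0 h0 n).1.take k = hist (playOf A F N sig v0 h0) k := by
  apply List.ext_getElem
  · simp [hist, Nat.min_eq_left hk]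
  · intro i h1 h2
    simp only [List.length_take] at h1
    have hik : i < k := lt_of_lt_of_le h1 (min_le_left _ _)
    have hil : i < (chain A F N sig v0 h0 n).1.length := lt_of_lt_of_le hik hk
    rw [List.getElem_take]
    have := playOf_eq A F N sig v0 h0 (n := n) (k := i) hil
    rw [List.getD_eq_getElem _ _ hil] at this
    rw [this]
    simp [hist]

lemma playOf_cons : EveConsistent A sig (playOf A F N sig v0 h0) := by
  intro k hev
  have hlen := chain_len A F N sig v0 h0 (k+2)
  have h1 : k < (chain A F N sig v0 h0 (k+2)).1.length := by omega
  have h2 : k + 1 < (chain A F N sig v0 h0 (k+2)).1.length := by omega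
  rw [← playOf_eq A F N sig v0 h0 h1, ← playOf_eq A F N sig v0 h0 h2,
    ← take_eq_hist A F N sig v0 h0 (k+2) k (le_of_lt h1)]
  apply (chain A F N sig v0 h0 (k+2)).2.2.2.1 k h2
  rw [playOf_eq A F N sig v0 h0 h1]
  exact hev

lemma playOf_zero : playOf A F N sig v0 h0 0 = v0 := by
  have h1 : (0 : ℕ) < (chain A F N sig v0 h0 0).1.length := by
    have := chain_len A F N sig v0 h0 0; omega
  rw [← playOf_eq A F N sig v0 h0 h1]
  rfl

lemma playOf_windows (n : ℕ) :
    ∃ q, n ≤ q ∧ ∀ j ≤ N, playOf A F N sig v0 h0 (q + j) ∉ F := by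
  obtain ⟨hene, hPP, q, hq1, hq2, hwin⟩ := chain_spec A F N sig v0 h0 n
  have hlen := chain_len A F N sig v0 h0 n
  refine ⟨q, by omega, fun j hj => ?_⟩
  have hjlt : q + j < (chain A F N sig v0 h0 (n+1)).1.length := by
    rw [chain_succ]
    have : q + j < q + N + 1 := by omega
    calc q + j < q + N + 1 := this
      _ ≤ _ := hq2
  rw [← playOf_eq A F N sig v0 h0 hjlt]
  rw [chain_succ]
  exact hwin j hj

end Completeness

lemma complete {v : V} (hv : v ∈ WE A (UnifBuchi F N)) : v ∈ Wset A F N := by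
  by_contra hvW
  letI : Inhabited V := ⟨v⟩
  obtain ⟨sig, hwin⟩ := hv
  have h0 : PP A F N sig [v] := by
    refine ⟨by simp, ?_, ?_, ?_⟩
    · intro i hi; simp at hi
    · intro i hi; simp at hi
    · simpa [Uset] using hvW
  set π := playOf A F N sig v h0 with hπ
  have hmem : π ∈ UnifBuchi F N :=
    hwin π (playOf_isPlay A F N sig v h0) (playOf_zero A F N sig v h0)
      (playOf_cons A F N sig v h0)
  have hfreq : ∃ᶠ k in atTop, (N : ℕ∞) + 1 ≤ distB π F k := by
    rw [frequently_atTop]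
    intro a
    obtain ⟨q, hq, hwinq⟩ := playOf_windows A F N sig v h0 a
    refine ⟨q, hq, ?_⟩
    apply le_sInf
    rintro x ⟨j, hjF, rfl⟩
    have hjN : ¬ j ≤ N := fun hj => hwinq j hj hjF
    have hj1 : N + 1 ≤ j := by omega
    show (N : ℕ∞) + 1 ≤ (j : ℕ∞)
    exact_mod_cast hj1
  have hub := le_limsup_of_frequently_le hfreq (by isBoundedDefault)
  have hcontra : (N : ℕ∞) + 1 ≤ (N : ℕ∞) := le_trans hub hmem
  have : ((N + 1 : ℕ) : ℕ∞) ≤ ((N : ℕ) : ℕ∞) := by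
    rwa [Nat.cast_add, Nat.cast_one]
  exact absurd (Nat.cast_le.mp this) (by omega)

end Stmt6Aux

open GameDefs in
/-- positional strategies suffice for Eve in uniform Büchi games. -/
theorem stmt6 {V : Type} [Countable V] (A : Arena V) (F : Set V) (N : ℕ) :
    ∃ σ : PosStrategy A, ∀ v ∈ WE A (UnifBuchi F N), PosWinsFrom A σ (UnifBuchi F N) v := by
  exact ⟨Stmt6Aux.posStr A F N, fun v hv =>
    Stmt6Aux.sound v (Stmt6Aux.complete A F N hv)⟩
end

section
/- For every arena A over a countable vertex set, every Büchi set F ⊆ V, and every N ∈ ℕ, Adam has a finite-memory strategy using at most N+1 memory states that is winning from every vertex of his winning set W_A(Büchi(F,N)), i.e., it ensures that every consistent play lies outside the uniform Büchi condition Büchi(F,N). -/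
open Filter Set

namespace Stmt7Aux
open GameDefs Set

variable {P : Type}

/-! ### Adam's one-step forcing and ordinal-indexed attractor -/

/-- Adam's one-step forcing predecessor: Adam can ensure the next vertex is in `X`. -/
def aPre (B : Arena P) (X : Set P) : Set P :=
  {p | (p ∉ B.eve ∧ ∃ w, B.edge p w ∧ w ∈ X) ∨ (p ∈ B.eve ∧ ∀ w, B.edge p w → w ∈ X)}

theorem aPre_mono (B : Arena P) : Monotone (aPre B) := by
  intro X Y h p hp
  rcases hp with ⟨ha, w, he, hw⟩ | ⟨he, hall⟩
  · exact Or.inl ⟨ha, w, he, h hw⟩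
  · exact Or.inr ⟨he, fun w hw => h (hall w hw)⟩

/-- Ordinal-indexed stages of Adam's attractor of `X`. -/
noncomputable def stage (B : Arena P) (X : Set P) (o : Ordinal.{0}) : Set P :=
  X ∪ aPre B (⋃ o' : {o'' : Ordinal.{0} // o'' < o}, stage B X o'.1)
termination_by o
decreasing_by exact o'.2

/-- Adam's attractor of `X`: union of all stages. -/
noncomputable def attr (B : Arena P) (X : Set P) : Set P :=
  ⋃ o : Ordinal.{0}, stage B X o

theorem subset_stage (B : Arena P) (X : Set P) (o : Ordinal.{0}) : X ⊆ stage B X o := by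
  rw [stage]; exact Set.subset_union_left

theorem stage_subset_attr (B : Arena P) (X : Set P) (o : Ordinal.{0}) :
    stage B X o ⊆ attr B X :=
  Set.subset_iUnion (fun o => stage B X o) o

theorem subset_attr (B : Arena P) (X : Set P) : X ⊆ attr B X :=
  (subset_stage B X 0).trans (stage_subset_attr B X 0)

theorem mem_attr_iff (B : Arena P) (X : Set P) (p : P) :
    p ∈ attr B X ↔ ∃ o, p ∈ stage B X o := Set.mem_iUnion

theorem attr_closed (B : Arena P) (X : Set P) : aPre B (attr B X) ⊆ attr B X := by
  intro p hp
  rcases hp with ⟨ha, w, he, hw⟩ | ⟨he, hall⟩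
  · obtain ⟨o, ho⟩ := (mem_attr_iff B X w).1 hw
    refine (stage_subset_attr B X (Order.succ o)) ?_
    rw [stage]
    refine Or.inr (Or.inl ⟨ha, w, he, ?_⟩)
    exact Set.mem_iUnion.2 ⟨⟨o, Order.lt_succ o⟩, ho⟩
  · -- each successor lies in some stage; take lsub of those ordinals
    have hex : ∀ w : {w // B.edge p w}, ∃ o, (w : P) ∈ stage B X o :=
      fun w => (mem_attr_iff B X w).1 (hall w w.2)
    let g : {w // B.edge p w} → Ordinal.{0} := fun w => Classical.choose (hex w)
    refine (stage_subset_attr B X (Ordinal.lsub g)) ?_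
    rw [stage]
    refine Or.inr (Or.inr ⟨he, fun w hw => ?_⟩)
    exact Set.mem_iUnion.2 ⟨⟨g ⟨w, hw⟩, Ordinal.lt_lsub g ⟨w, hw⟩⟩,
      Classical.choose_spec (hex ⟨w, hw⟩)⟩

/-- The stage rank of a vertex in the attractor. -/
noncomputable def rank (B : Arena P) (X : Set P) (p : P) : Ordinal.{0} :=
  sInf {o | p ∈ stage B X o}

theorem mem_stage_rank (B : Arena P) (X : Set P) {p : P} (hp : p ∈ attr B X) :
    p ∈ stage B X (rank B X p) :=
  csInf_mem ((mem_attr_iff B X p).1 hp)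

theorem rank_le (B : Arena P) (X : Set P) {p : P} {o : Ordinal.{0}}
    (hp : p ∈ stage B X o) : rank B X p ≤ o :=
  csInf_le' hp

/-- Structure of attractor membership off the target set: a rank-decreasing move. -/
theorem attr_step (B : Arena P) (X : Set P) {p : P} (hp : p ∈ attr B X) (hpX : p ∉ X) :
    (p ∉ B.eve → ∃ w, B.edge p w ∧ w ∈ attr B X ∧ rank B X w < rank B X p) ∧
    (p ∈ B.eve → ∀ w, B.edge p w → w ∈ attr B X ∧ rank B X w < rank B X p) := by
  have h := mem_stage_rank B X hp
  rw [stage] at h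
  rcases h with h | h
  · exact absurd h hpX
  constructor
  · intro hA
    rcases h with ⟨_, w, he, hw⟩ | ⟨hE, _⟩
    · obtain ⟨⟨o, ho⟩, hwo⟩ := Set.mem_iUnion.1 hw
      exact ⟨w, he, stage_subset_attr B X o hwo, lt_of_le_of_lt (rank_le B X hwo) ho⟩
    · exact absurd hE hA
  · intro hE w hw
    rcases h with ⟨hA, _⟩ | ⟨_, hall⟩
    · exact absurd hE hA
    · obtain ⟨⟨o, ho⟩, hwo⟩ := Set.mem_iUnion.1 (hall w hw)
      exact ⟨stage_subset_attr B X o hwo, lt_of_le_of_lt (rank_le B X hwo) ho⟩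

theorem stage_mono (B : Arena P) {X Y : Set P} (h : X ⊆ Y) :
    ∀ o : Ordinal.{0}, stage B X o ⊆ stage B Y o := by
  intro o
  induction o using Ordinal.induction with
  | h o ih =>
    rw [stage, stage]
    refine Set.union_subset_union h (aPre_mono B ?_)
    intro p hp
    obtain ⟨⟨o', ho'⟩, hpo⟩ := Set.mem_iUnion.1 hp
    exact Set.mem_iUnion.2 ⟨⟨o', ho'⟩, ih o' ho' hpo⟩

theorem attr_mono (B : Arena P) : Monotone (attr B) := by
  intro X Y h p hp
  obtain ⟨o, ho⟩ := (mem_attr_iff B X p).1 hp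
  exact (mem_attr_iff B Y p).2 ⟨o, stage_mono B h o ho⟩

/-! ### The Büchi fixpoint -/

/-- The Büchi operator for Adam with target `T`. -/
noncomputable def Phi (B : Arena P) (T : Set P) : Set P →o Set P :=
  ⟨fun Y => attr B (T ∩ aPre B Y),
   fun Y Z h => attr_mono B (Set.inter_subset_inter_right T (aPre_mono B h))⟩

/-- Adam's Büchi winning region: greatest fixpoint of the Büchi operator. -/
noncomputable def buchiZ (B : Arena P) (T : Set P) : Set P := OrderHom.gfp (Phi B T)

theorem buchiZ_fixed (B : Arena P) (T : Set P) :
    buchiZ B T = attr B (T ∩ aPre B (buchiZ B T)) :=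
  (OrderHom.map_gfp (Phi B T)).symm

/-! ### Building plays step by step -/

/-- Auxiliary: the history list built from a step function. -/
noncomputable def bSeq (g : List P → P) : ℕ → List P
  | 0 => []
  | n + 1 => bSeq g n ++ [g (bSeq g n)]

/-- The play built from a step function. -/
noncomputable def bPlay (g : List P → P) (n : ℕ) : P := g (bSeq g n)

theorem hist_succ (π : ℕ → P) (n : ℕ) : hist π (n + 1) = hist π n ++ [π n] := by
  simp [hist, List.range_succ]

theorem bSeq_eq_hist (g : List P → P) : ∀ n, bSeq g n = hist (bPlay g) n := by
  intro n
  induction n with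
  | zero => simp [bSeq, hist]
  | succ n ih =>
    have hb : bPlay g n = g (hist (bPlay g) n) := by rw [← ih]; rfl
    rw [bSeq, hist_succ, ih, hb]

/-- The canonical play from `v` following a step function. -/
noncomputable def build (v : P) (step : List P → P → P) : ℕ → P :=
  bPlay (fun l => match l.getLast? with
    | none => v
    | some p => step l.dropLast p)

theorem build_zero (v : P) (step : List P → P → P) : build v step 0 = v := rfl

theorem build_succ (v : P) (step : List P → P → P) (n : ℕ) :
    build v step (n + 1) = step (hist (build v step) n) (build v step n) := by
  have h1 : build v step (n+1) = (fun l : List P => match l.getLast? with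
      | none => v | some p => step l.dropLast p) (hist (build v step) (n+1)) := by
    show bPlay _ (n+1) = _
    rw [bPlay, bSeq_eq_hist]
    rfl
  rw [h1, hist_succ]
  simp only [List.getLast?_concat, List.dropLast_concat]

theorem build_isPlay (B : Arena P) (v : P) (step : List P → P → P)
    (hstep : ∀ h p, B.edge p (step h p)) : IsPlay B (build v step) := by
  intro k
  rw [build_succ]
  exact hstep _ _

theorem build_consistent (B : Arena P) (v : P) (step : List P → P → P)
    (τ : AdamStrategy B) (hτ : ∀ h p, p ∉ B.eve → step h p = τ.move h p) :
    AdamConsistent B τ (build v step) := by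
  intro k hk
  rw [build_succ]
  exact hτ _ _ hk

/-! ### Shift lemmas for the (complement of the) Büchi condition -/

theorem hist_congr {π π' : ℕ → P} (k : ℕ) (h : ∀ j < k, π j = π' j) :
    hist π k = hist π' k := by
  simp only [hist]
  exact List.map_congr_left (fun a ha => h a (List.mem_range.1 ha))

/-- Along a play consistent with a winning strategy for Adam, every visited vertex
is in Adam's winning region. -/
theorem adamWins_shift {B : Arena P} {T : Set P} {τ : AdamStrategy B} {p : P}
    (hwin : AdamWinsFrom B τ ((BuchiCond T)ᶜ) p) {π : ℕ → P} (hπ : IsPlay B π)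
    (h0 : π 0 = p) (hc : AdamConsistent B τ π) (k : ℕ) :
    π k ∈ WA B ((BuchiCond T)ᶜ) := by
  refine ⟨⟨fun h' u => τ.move (hist π k ++ h') u, fun h' u hu => τ.legal _ u hu⟩, ?_⟩
  intro π' hπ' h0' hc'
  set πg : ℕ → P := fun j => if j < k then π j else π' (j - k) with hπg
  have hle : ∀ j ≤ k, πg j = π j := by
    intro j hj
    rcases lt_or_eq_of_le hj with h | h
    · simp [hπg, h]
    · subst h; simp [hπg, h0', lt_irrefl]
  have hge : ∀ j, πg (k + j) = π' j := by
    intro j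
    simp [hπg, Nat.add_sub_cancel_left, Nat.not_lt.2 (Nat.le_add_right k j)]
  have hgplay : IsPlay B πg := by
    intro j
    rcases Nat.lt_or_ge j k with h | h
    · have e1 : πg j = π j := hle j (le_of_lt h)
      have e2 : πg (j+1) = π (j+1) := hle (j+1) h
      rw [e1, e2]; exact hπ j
    · obtain ⟨i, rfl⟩ := Nat.exists_eq_add_of_le h
      have e1 : πg (k + i) = π' i := hge i
      have e2 : πg (k + i + 1) = π' (i + 1) := by
        have : k + i + 1 = k + (i + 1) := by omega
        rw [this, hge]
      rw [e1, e2]; exact hπ' i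
  have hhist : ∀ j, hist πg (k + j) = hist π k ++ hist π' j := by
    intro j
    induction j with
    | zero =>
      simp only [Nat.add_zero]
      rw [show hist π' 0 = [] from rfl, List.append_nil]
      exact hist_congr k (fun a ha => hle a (le_of_lt ha))
    | succ j ih =>
      rw [show k + (j+1) = (k + j) + 1 by omega, hist_succ, ih, hge, hist_succ,
        List.append_assoc]
  have hgcons : AdamConsistent B τ πg := by
    intro j hj
    rcases Nat.lt_or_ge j k with h | h
    · have e1 : πg j = π j := hle j (le_of_lt h)
      have e2 : πg (j+1) = π (j+1) := hle (j+1) h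
      rw [e1, e2]
      rw [e1] at hj
      rw [hc j hj]
      congr 1
      exact (hist_congr j (fun a ha => hle a (by omega))).symm
    · obtain ⟨i, rfl⟩ := Nat.exists_eq_add_of_le h
      have e1 : πg (k + i) = π' i := hge i
      have e2 : πg (k + i + 1) = π' (i + 1) := by
        have : k + i + 1 = k + (i + 1) := by omega
        rw [this, hge]
      rw [e1, e2]
      rw [e1] at hj
      rw [hc' i hj, hhist]
  have hg0 : πg 0 = p := by
    rw [hle 0 (Nat.zero_le k), h0]
  have hbuchi : πg ∈ BuchiCond T := by
    have := hwin πg hgplay hg0 hgcons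
    simpa using this
  simp only [Set.mem_compl_iff, not_not]
  intro m
  obtain ⟨t, ht, hT⟩ := hbuchi (k + m)
  refine ⟨t - k, by omega, ?_⟩
  have he : πg t = π' (t - k) := by
    conv_lhs => rw [show t = k + (t - k) by omega]
    exact hge (t - k)
  rwa [he] at hT


/-- If Eve controls `p` in her... in Adam's winning region, every successor stays there. -/
theorem eveStep {B : Arena P} {T : Set P} {p w : P}
    (hp : p ∈ WA B ((BuchiCond T)ᶜ)) (he : p ∈ B.eve) (hw : B.edge p w) :
    w ∈ WA B ((BuchiCond T)ᶜ) := by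
  obtain ⟨τ, hτ⟩ := hp
  classical
  set step : List P → P → P := fun h q =>
    if hq : q ∉ B.eve then τ.move h q
    else if h = [] ∧ q = p then w
    else Classical.choose (B.succ q) with hstepdef
  have hlegal : ∀ h q, B.edge q (step h q) := by
    intro h q
    by_cases hq : q ∉ B.eve
    · simp only [hstepdef, dif_pos hq]; exact τ.legal h q hq
    · simp only [hstepdef, dif_neg hq]
      by_cases hc : h = [] ∧ q = p
      · rw [if_pos hc, hc.2]; exact hw
      · rw [if_neg hc]; exact Classical.choose_spec (B.succ q)
  set π := build p step with hπdef
  have hplay : IsPlay B π := build_isPlay B p step hlegal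
  have hcons : AdamConsistent B τ π := by
    refine build_consistent B p step τ (fun h q hq => ?_)
    simp only [hstepdef, dif_pos hq]
  have h0 : π 0 = p := build_zero p step
  have h1 : π 1 = w := by
    rw [hπdef, build_succ]
    have hh : hist (build p step) 0 = [] := by simp [hist]
    rw [hh, build_zero]
    simp only [hstepdef]
    rw [dif_neg (by simpa using he)]
    simp
  have := adamWins_shift hτ hplay h0 hcons 1
  rwa [h1] at this

/-- Completeness: Adam's winning region is contained in the Büchi fixpoint. -/
theorem WA_subset_buchiZ (B : Arena P) (T : Set P) :
    WA B ((BuchiCond T)ᶜ) ⊆ buchiZ B T := by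
  have hpost : WA B ((BuchiCond T)ᶜ) ≤ Phi B T (WA B ((BuchiCond T)ᶜ)) := by
    intro v hv
    by_contra hvX
    obtain ⟨τ, hτ⟩ := hv
    classical
    set W := WA B ((BuchiCond T)ᶜ) with hWdef
    set X : Set P := attr B (T ∩ aPre B W) with hXdef
    have hXcl : aPre B X ⊆ X := attr_closed B _
    set step : List P → P → P := fun h q =>
      if hq : q ∉ B.eve then τ.move h q
      else if hex : ∃ u, B.edge q u ∧ u ∉ X then Classical.choose hex
      else Classical.choose (B.succ q) with hstepdef
    have hlegal : ∀ h q, B.edge q (step h q) := by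
      intro h q
      by_cases hq : q ∉ B.eve
      · simp only [hstepdef, dif_pos hq]; exact τ.legal h q hq
      · simp only [hstepdef, dif_neg hq]
        by_cases hex : ∃ u, B.edge q u ∧ u ∉ X
        · rw [dif_pos hex]; exact (Classical.choose_spec hex).1
        · rw [dif_neg hex]; exact Classical.choose_spec (B.succ q)
    set π := build v step with hπdef
    have hplay : IsPlay B π := build_isPlay B v step hlegal
    have hcons : AdamConsistent B τ π := by
      refine build_consistent B v step τ (fun h q hq => ?_)
      simp only [hstepdef, dif_pos hq]
    have h0 : π 0 = v := build_zero v step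
    have hnotX : ∀ k, π k ∉ X := by
      intro k
      induction k with
      | zero => rw [h0]; exact hvX
      | succ k ih =>
        rw [hπdef, build_succ]
        by_cases hq : π k ∉ B.eve
        · intro hmem
          apply ih
          apply hXcl
          refine Or.inl ⟨hq, step (hist π k) (π k), hlegal _ _, ?_⟩
          exact hmem
        · simp only [hstepdef, dif_neg hq]
          by_cases hex : ∃ u, B.edge (π k) u ∧ u ∉ X
          · rw [dif_neg hq, dif_pos hex]; exact (Classical.choose_spec hex).2
          · exfalso
            push_neg at hex
            apply ih
            apply hXcl
            exact Or.inr ⟨not_not.1 hq, hex⟩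
    have hbuchi : π ∈ BuchiCond T := by
      have := hτ π hplay h0 hcons
      simpa using this
    obtain ⟨t, -, hT⟩ := hbuchi 0
    apply hnotX t
    apply subset_attr B (T ∩ aPre B W)
    refine ⟨hT, ?_⟩
    by_cases he : π t ∈ B.eve
    · exact Or.inr ⟨he, fun u hu =>
        eveStep (adamWins_shift hτ hplay h0 hcons t) he hu⟩
    · exact Or.inl ⟨he, π (t+1), hplay t, adamWins_shift hτ hplay h0 hcons (t+1)⟩
  exact OrderHom.le_gfp (Phi B T) hpost

/-- Soundness: Adam has a single positional strategy winning the Büchi condition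
from every vertex of the fixpoint. -/
theorem buchi_positional (B : Arena P) (T : Set P) :
    ∃ f : P → P, (∀ p, B.edge p (f p)) ∧
      ∀ p ∈ buchiZ B T, ∀ π, IsPlay B π → π 0 = p →
        (∀ k, π k ∉ B.eve → π (k + 1) = f (π k)) → π ∈ BuchiCond T := by
  classical
  set Z := buchiZ B T with hZdef
  set R := T ∩ aPre B Z with hRdef
  have hZR : Z = attr B R := buchiZ_fixed B T
  have hspec : ∀ p : P, ∃ w : P, B.edge p w ∧
      (p ∉ B.eve → p ∈ Z →
        ((p ∈ R → w ∈ Z) ∧ (p ∉ R → w ∈ Z ∧ rank B R w < rank B R p))) := by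
    intro p
    by_cases hA : p ∉ B.eve
    · by_cases hZ : p ∈ Z
      · by_cases hR : p ∈ R
        · rcases hR.2 with ⟨-, u, hu, huZ⟩ | ⟨hE, -⟩
          · exact ⟨u, hu, fun _ _ => ⟨fun _ => huZ, fun hnR => absurd hR hnR⟩⟩
          · exact absurd hE hA
        · obtain ⟨u, hu, huA, hur⟩ := (attr_step B R (hZR ▸ hZ) hR).1 hA
          exact ⟨u, hu, fun _ _ => ⟨fun hR' => absurd hR' hR,
            fun _ => ⟨hZR ▸ huA, hur⟩⟩⟩
      · obtain ⟨u, hu⟩ := B.succ p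
        exact ⟨u, hu, fun _ hZ' => absurd hZ' hZ⟩
    · obtain ⟨u, hu⟩ := B.succ p
      exact ⟨u, hu, fun hA' => absurd hA' hA⟩
  choose f hf1 hf2 using hspec
  refine ⟨f, hf1, ?_⟩
  intro p hp π hplay h0 hcons
  -- invariant: the play stays in Z
  have hZstep : ∀ q, q ∈ Z → q ∈ B.eve → ∀ u, B.edge q u → u ∈ Z := by
    intro q hq he u hu
    by_cases hR : q ∈ R
    · rcases hR.2 with ⟨hA, -⟩ | ⟨-, hall⟩
      · exact absurd he hA
      · exact hall u hu
    · exact hZR ▸ ((attr_step B R (hZR ▸ hq) hR).2 he u hu).1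
  have hinv : ∀ k, π k ∈ Z := by
    intro k
    induction k with
    | zero => rw [h0]; exact hp
    | succ k ih =>
      by_cases he : π k ∈ B.eve
      · exact hZstep (π k) ih he (π (k+1)) (hplay k)
      · rw [hcons k he]
        rcases hf2 (π k) he ih with ⟨h1, h2⟩
        by_cases hR : π k ∈ R
        · exact h1 hR
        · exact (h2 hR).1
  -- from any point, the play reaches R
  have hreach : ∀ k, ∃ t, k ≤ t ∧ π t ∈ R := by
    intro k
    by_contra hno
    push_neg at hno
    have hdec : ∀ t, k ≤ t → rank B R (π (t+1)) < rank B R (π t) := by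
      intro t ht
      have hR : π t ∉ R := hno t ht
      by_cases he : π t ∈ B.eve
      · exact ((attr_step B R (hZR ▸ hinv t) hR).2 he (π (t+1)) (hplay t)).2
      · rw [hcons t he]
        exact ((hf2 (π t) he (hinv t)).2 hR).2
    set g : ℕ → Ordinal.{0} := fun n => rank B R (π (k + n)) with hgdef
    have hgdec : ∀ n, g (n+1) < g n := by
      intro n
      have := hdec (k + n) (Nat.le_add_right k n)
      simpa [hgdef, show k + n + 1 = k + (n+1) by omega] using this
    obtain ⟨o, ⟨n, hn⟩, hmin⟩ := Ordinal.lt_wf.has_min (Set.range g) ⟨g 0, 0, rfl⟩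
    exact hmin (g (n+1)) ⟨n+1, rfl⟩ (hn ▸ hgdec n)
  intro k
  obtain ⟨t, ht, hR⟩ := hreach k
  exact ⟨t, ht, hR.1⟩


/-! ### The counter memory and product arena -/

variable {V : Type}

open Classical in
/-- Counter update: count consecutive non-`F` vertices, resetting after reaching `N`. -/
noncomputable def cupd (F : Set V) (N : ℕ) : Fin (N+1) → V → V → Fin (N+1) :=
  fun m v _ => if v ∈ F ∨ (m : ℕ) = N then ⟨0, Nat.succ_pos N⟩
    else ⟨min ((m : ℕ) + 1) N, by omega⟩

/-- The counter memory structure. -/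
@[reducible] noncomputable def cMem (F : Set V) (N : ℕ) : Memory V :=
  ⟨Fin (N+1), ⟨0, Nat.succ_pos N⟩, cupd F N⟩

/-- The product arena tracking the memory state. -/
noncomputable def prodArena (A : Arena V) (F : Set V) (N : ℕ) : Arena (V × Fin (N+1)) where
  eve := {p | p.1 ∈ A.eve}
  edge := fun p q => A.edge p.1 q.1 ∧ q.2 = cupd F N p.2 p.1 q.1
  succ := fun p => by
    obtain ⟨w, hw⟩ := A.succ p.1
    exact ⟨(w, cupd F N p.2 p.1 w), hw, rfl⟩

/-- The target set: the counter is full and the current vertex avoids `F`. -/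
def cT (F : Set V) (N : ℕ) : Set (V × Fin (N+1)) :=
  {p | (p.2 : ℕ) = N ∧ p.1 ∉ F}

section Counter

variable (F : Set V) (N : ℕ) (π : ℕ → V)

/-- The natural-number value of the counter along a play. -/
noncomputable def cval (k : ℕ) : ℕ := ((memRun (cMem F N) π k : Fin (N+1)) : ℕ)

theorem cval_zero : cval F N π 0 = 0 := rfl

theorem cval_le (k : ℕ) : cval F N π k ≤ N :=
  Nat.lt_succ_iff.mp (memRun (cMem F N) π k).isLt

theorem cval_succ_reset {k : ℕ} (h : π k ∈ F ∨ cval F N π k = N) :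
    cval F N π (k+1) = 0 := by
  have h' : π k ∈ F ∨ ((memRun (cMem F N) π k : Fin (N+1)) : ℕ) = N := h
  show ((cupd F N (memRun (cMem F N) π k) (π k) (π (k+1)) : Fin (N+1)) : ℕ) = 0
  rw [cupd, if_pos h']

theorem cval_succ_inc {k : ℕ} (h1 : π k ∉ F) (h2 : cval F N π k ≠ N) :
    cval F N π (k+1) = cval F N π k + 1 := by
  have h2' : ¬ (π k ∈ F ∨ ((memRun (cMem F N) π k : Fin (N+1)) : ℕ) = N) := by
    push_neg; exact ⟨h1, h2⟩
  have hle := cval_le F N π k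
  show ((cupd F N (memRun (cMem F N) π k) (π k) (π (k+1)) : Fin (N+1)) : ℕ) = _
  rw [cupd, if_neg h2']
  show min (cval F N π k + 1) N = cval F N π k + 1
  have : cval F N π k ≠ N := h2
  omega

/-- The counter value bounds the history of non-`F` vertices. -/
theorem cval_window : ∀ t, cval F N π t ≤ t ∧ ∀ i < cval F N π t, π (t - 1 - i) ∉ F := by
  intro t
  induction t with
  | zero => simp [cval_zero]
  | succ t ih =>
    by_cases h : π t ∈ F ∨ cval F N π t = N
    · rw [cval_succ_reset F N π h]; simp
    · push_neg at h
      rw [cval_succ_inc F N π h.1 h.2]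
      refine ⟨by omega, ?_⟩
      intro i hi
      rcases Nat.eq_zero_or_pos i with hi0 | hipos
      · subst hi0
        simpa using h.1
      · obtain ⟨i', rfl⟩ := Nat.exists_eq_add_of_le hipos
        have harg : t + 1 - 1 - (1 + i') = t - 1 - i' := by omega
        rw [harg]
        exact ih.2 i' (by omega)

/-- A full counter with a non-`F` vertex yields an `F`-free window of length `N+1`. -/
theorem hit_window {t : ℕ} (h1 : cval F N π t = N) (h2 : π t ∉ F) :
    N ≤ t ∧ ∀ j ≤ N, π (t - N + j) ∉ F := by
  obtain ⟨hle, hwin⟩ := cval_window F N π t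
  rw [h1] at hle hwin
  refine ⟨hle, fun j hj => ?_⟩
  rcases Nat.lt_or_ge j N with hjN | hjN
  · have harg : t - N + j = t - 1 - (N - 1 - j) := by omega
    rw [harg]
    exact hwin (N - 1 - j) (by omega)
  · have harg : t - N + j = t := by omega
    rwa [harg]

/-- An `F`-free window of length `N+1` yields a full-counter hit inside it. -/
theorem window_hit {k : ℕ} (h : ∀ j ≤ N, π (k + j) ∉ F) :
    ∃ t, k ≤ t ∧ t ≤ k + N ∧ cval F N π t = N ∧ π t ∉ F := by
  by_cases hex : ∃ j ≤ N, cval F N π (k + j) = N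
  · obtain ⟨j, hj, hcj⟩ := hex
    exact ⟨k + j, Nat.le_add_right k j, by omega, hcj, h j hj⟩
  · exfalso
    push_neg at hex
    have hstep : ∀ j ≤ N, cval F N π (k + j) = cval F N π k + j := by
      intro j
      induction j with
      | zero => simp
      | succ j ihj =>
        intro hj
        have harg : k + (j + 1) = (k + j) + 1 := by omega
        rw [harg, cval_succ_inc F N π (h j (by omega)) (hex j (by omega)), ihj (by omega)]
        omega
    have h1 := hstep N le_rfl
    have h2 := cval_le F N π (k + N)
    exact hex N le_rfl (by omega)

end Counter

/-! ### `UnifBuchi` combinatorics -/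

theorem distB_le_iff (π : ℕ → V) (F : Set V) (k N : ℕ) :
    distB π F k ≤ (N : ℕ∞) ↔ ∃ j ≤ N, π (k + j) ∈ F := by
  constructor
  · intro h
    by_contra hno
    push_neg at hno
    have hlb : (N : ℕ∞) + 1 ≤ distB π F k := by
      apply le_sInf
      rintro x ⟨j, hj, rfl⟩
      have hjN : N + 1 ≤ j := by
        by_contra hc
        exact hno j (by omega) hj
      calc (N : ℕ∞) + 1 = ((N + 1 : ℕ) : ℕ∞) := by push_cast; ring
        _ ≤ (j : ℕ∞) := by exact_mod_cast hjN
    have : (N : ℕ∞) + 1 ≤ (N : ℕ∞) := hlb.trans h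
    have h2 : ((N + 1 : ℕ) : ℕ∞) ≤ ((N : ℕ) : ℕ∞) := by push_cast at this ⊢; exact this
    rw [Nat.cast_le] at h2
    omega
  · rintro ⟨j, hj, hF⟩
    calc distB π F k ≤ (j : ℕ∞) := sInf_le ⟨j, hF, rfl⟩
      _ ≤ (N : ℕ∞) := by exact_mod_cast hj

theorem notUnifBuchi_iff (π : ℕ → V) (F : Set V) (N : ℕ) :
    π ∉ UnifBuchi F N ↔ ∀ m, ∃ k, m ≤ k ∧ ∀ j ≤ N, π (k + j) ∉ F := by
  have hiff : ∀ k, ¬ distB π F k ≤ (N : ℕ∞) ↔ ∀ j ≤ N, π (k + j) ∉ F := by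
    intro k
    rw [distB_le_iff]
    push_neg
    rfl
  constructor
  · intro h m
    by_contra hno
    push_neg at hno
    apply h
    show Filter.limsup (fun k => distB π F k) Filter.atTop ≤ (N : ℕ∞)
    rw [Filter.limsup_eq_iInf_iSup_of_nat]
    refine le_trans (iInf_le _ m) ?_
    refine iSup_le fun k => iSup_le fun hk => ?_
    obtain ⟨j, hj, hF⟩ := hno k hk
    exact (distB_le_iff π F k N).2 ⟨j, hj, hF⟩
  · intro h hmem
    rw [UnifBuchi, Set.mem_setOf_eq, Filter.limsup_eq_iInf_iSup_of_nat] at hmem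
    have hlb : ∀ n : ℕ, ((N : ℕ∞) + 1) ≤ ⨆ i ≥ n, distB π F i := by
      intro n
      obtain ⟨k, hk, hwin⟩ := h n
      have h1 : ¬ distB π F k ≤ (N : ℕ∞) := (hiff k).2 hwin
      refine le_trans ?_ (le_iSup_of_le k (le_iSup_of_le hk le_rfl))
      rcases not_le.1 h1 with h2
      exact ENat.add_one_le_iff (by simp) |>.2 h2
    have : (N : ℕ∞) + 1 ≤ (N : ℕ∞) := le_trans (le_iInf hlb) hmem
    have h2 : ((N + 1 : ℕ) : ℕ∞) ≤ ((N : ℕ) : ℕ∞) := by push_cast at this ⊢; exact this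
    rw [Nat.cast_le] at h2
    omega

/-! ### Transfer between the original and product games -/

/-- From a winning general strategy in the original game, a winning general strategy
in the product game. -/
theorem transfer_to_prod (A : Arena V) (F : Set V) (N : ℕ) {v : V}
    (hv : v ∈ WA A (UnifBuchi F N)) :
    ((v, (⟨0, Nat.succ_pos N⟩ : Fin (N+1))) : V × Fin (N+1)) ∈
      WA (prodArena A F N) ((BuchiCond (cT F N))ᶜ) := by
  obtain ⟨τ, hτ⟩ := hv
  refine ⟨⟨fun h p => (τ.move (h.map Prod.fst) p.1,
      cupd F N p.2 p.1 (τ.move (h.map Prod.fst) p.1)),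
    fun h p hp => ⟨τ.legal _ p.1 hp, rfl⟩⟩, ?_⟩
  intro ρ hρ h0 hc
  set π : ℕ → V := fun k => (ρ k).1 with hπdef
  have hplay : IsPlay A π := fun k => (hρ k).1
  have h0' : π 0 = v := by show (ρ 0).1 = v; rw [h0]
  have hmem : ∀ k, (ρ k).2 = memRun (cMem F N) π k := by
    intro k
    induction k with
    | zero => rw [h0]; rfl
    | succ k ih => rw [(hρ k).2, ih]; rfl
  have hcons : AdamConsistent A τ π := by
    intro k hk
    have hk' : ρ k ∉ (prodArena A F N).eve := hk
    have := congrArg Prod.fst (hc k hk')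
    simp only at this
    rw [hπdef]
    simp only
    rw [this]
    congr 1
    show (hist ρ k).map Prod.fst = hist π k
    simp [hist, List.map_map]
    intro a _; rfl
  have hnin := hτ π hplay h0' hcons
  rw [notUnifBuchi_iff] at hnin
  simp only [Set.mem_compl_iff, not_not]
  intro m
  obtain ⟨k, hk, hwin⟩ := hnin m
  obtain ⟨t, ht1, ht2, hct, hπt⟩ := window_hit F N π hwin
  refine ⟨t, by omega, ?_⟩
  show ((ρ t).2 : ℕ) = N ∧ (ρ t).1 ∉ F
  rw [hmem t]
  exact ⟨hct, hπt⟩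

end Stmt7Aux

open GameDefs in
/-- Adam has a winning strategy with at most `N+1` memory states from his
winning set in uniform Büchi games with bound `N`. -/
theorem stmt7 {V : Type} [Countable V] (A : Arena V) (F : Set V) (N : ℕ) :
    ∃ Mem : Memory V, ∃ _ : Finite Mem.M, ∃ τ : AdamMemStrategy A Mem,
      Nat.card Mem.M ≤ N + 1 ∧
      ∀ v ∈ WA A (UnifBuchi F N), AdamMemWinsFrom A Mem τ (UnifBuchi F N) v := by
  classical
  obtain ⟨f, hf, hwin⟩ :=
    Stmt7Aux.buchi_positional (Stmt7Aux.prodArena A F N) (Stmt7Aux.cT F N)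
  refine ⟨Stmt7Aux.cMem F N, (inferInstance : Finite (Fin (N+1))),
    ⟨fun v m => (f (v, m)).1, fun v m hv => (hf (v, m)).1⟩,
    le_of_eq (by simp [Stmt7Aux.cMem, Nat.card_eq_fintype_card]), ?_⟩
  intro v hv π hplay h0 hcons
  set Mem := Stmt7Aux.cMem F N with hMem
  set ρ : ℕ → V × Fin (N+1) := fun k => (π k, memRun Mem π k) with hρdef
  have hρplay : IsPlay (Stmt7Aux.prodArena A F N) ρ := fun k => ⟨hplay k, rfl⟩
  have hρ0 : ρ 0 = ((v, ⟨0, Nat.succ_pos N⟩) : V × Fin (N+1)) := by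
    show (π 0, Mem.m0) = _
    rw [h0]
  have hρcons : ∀ k, ρ k ∉ (Stmt7Aux.prodArena A F N).eve → ρ (k+1) = f (ρ k) := by
    intro k hk
    have hkv : π k ∉ A.eve := hk
    have h1 : π (k+1) = (f (ρ k)).1 := hcons k hkv
    have h2 := (hf (ρ k)).2
    refine Prod.ext h1 ?_
    show memRun Mem π (k+1) = (f (ρ k)).2
    rw [h2, ← h1]
    rfl
  have hmemb : ρ 0 ∈ Stmt7Aux.buchiZ (Stmt7Aux.prodArena A F N) (Stmt7Aux.cT F N) := by
    rw [hρ0]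
    exact Stmt7Aux.WA_subset_buchiZ _ _ (Stmt7Aux.transfer_to_prod A F N hv)
  have hB := hwin (ρ 0) hmemb ρ hρplay rfl hρcons
  rw [Stmt7Aux.notUnifBuchi_iff]
  intro m
  obtain ⟨t, ht, hT⟩ := hB (m + N)
  have hT' : Stmt7Aux.cval F N π t = N ∧ π t ∉ F := hT
  have hw := Stmt7Aux.hit_window F N π hT'.1 hT'.2
  exact ⟨t - N, by omega, hw.2⟩
end

section
/- For every arena A over a countable vertex set and every Büchi set F ⊆ V, Eve has a positional strategy that is winning from every vertex of her winning set W_E(FinBüchi(F)) for the finitary Büchi condition FinBüchi(F). -/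
open Filter Set

namespace Stmt8Aux

open GameDefs OrderHom

variable {V : Type} (A : Arena V) (F : Set V)

/-! ### Basic attractor lemmas -/

theorem attrE_zero (X : Set V) : AttrE A 0 X = X := rfl

theorem attrE_succ (k : ℕ) (X : Set V) :
    AttrE A (k + 1) X = AttrE A k X ∪ Pre A (AttrE A k X) := rfl

theorem subset_attrE (N : ℕ) (X : Set V) : X ⊆ AttrE A N X := by
  induction N with
  | zero => exact subset_rfl
  | succ n ih => exact ih.trans Set.subset_union_left

theorem attrE_le_nat {M N : ℕ} (h : M ≤ N) (X : Set V) : AttrE A M X ⊆ AttrE A N X := by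
  induction N with
  | zero => obtain rfl : M = 0 := Nat.le_zero.mp h; exact subset_rfl
  | succ n ih =>
      rcases Nat.lt_or_ge M (n+1) with h' | h'
      · exact (ih (Nat.lt_succ_iff.mp h')).trans Set.subset_union_left
      · obtain rfl : M = n + 1 := le_antisymm h h'
        exact subset_rfl

theorem mem_pre_eve {u : V} {X : Set V} (hu : u ∈ A.eve) {w : V}
    (hw : A.edge u w) (hwX : w ∈ X) : u ∈ Pre A X :=
  Or.inl ⟨hu, w, hw, hwX⟩

theorem mem_pre_adam {u : V} {X : Set V} (hu : u ∉ A.eve)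
    (h : ∀ w, A.edge u w → w ∈ X) : u ∈ Pre A X :=
  Or.inr ⟨hu, h⟩

theorem pre_adam_forall {u : V} {X : Set V} (hu : u ∉ A.eve) (h : u ∈ Pre A X) :
    ∀ w, A.edge u w → w ∈ X := by
  rcases h with ⟨he, _⟩ | ⟨_, h⟩
  · exact absurd he hu
  · exact h

theorem pre_eve_exists {u : V} {X : Set V} (hu : u ∈ A.eve) (h : u ∈ Pre A X) :
    ∃ w, A.edge u w ∧ w ∈ X := by
  rcases h with ⟨_, w, hw⟩ | ⟨ha, _⟩
  · exact ⟨w, hw⟩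
  · exact absurd hu ha

/-! ### The fixpoint operators -/

/-- The inner operator whose gfp is `D N Z`. -/
def Dop (N : ℕ) (Z : Set V) : Set V →o Set V :=
  ⟨fun Y => AttrE A N (Z ∪ (F ∩ Pre A Y)),
   fun Y Y' h => AttrE_mono A N (Set.union_subset_union_right _
     (Set.inter_subset_inter_right _ (Pre_mono A h)))⟩

/-- `D N Z`: Eve can, within `N` steps, reach `Z` or reach an `F`-vertex from which she
can continue in `D N Z`. -/
def D (N : ℕ) (Z : Set V) : Set V := (Dop A F N Z).gfp

theorem D_fixed (N : ℕ) (Z : Set V) :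
    AttrE A N (Z ∪ (F ∩ Pre A (D A F N Z))) = D A F N Z :=
  map_gfp (Dop A F N Z)

theorem D_coind {N : ℕ} {Z S : Set V}
    (h : S ⊆ AttrE A N (Z ∪ (F ∩ Pre A S))) : S ⊆ D A F N Z :=
  le_gfp (f := Dop A F N Z) h

theorem D_mono_Z {N : ℕ} {Z Z' : Set V} (h : Z ⊆ Z') : D A F N Z ⊆ D A F N Z' := by
  refine D_coind A F ?_
  calc D A F N Z = AttrE A N (Z ∪ (F ∩ Pre A (D A F N Z))) := (D_fixed A F N Z).symm
    _ ⊆ AttrE A N (Z' ∪ (F ∩ Pre A (D A F N Z))) :=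
        AttrE_mono A N (Set.union_subset_union_left _ h)

theorem D_mono_N {M N : ℕ} (h : M ≤ N) (Z : Set V) : D A F M Z ⊆ D A F N Z := by
  refine D_coind A F ?_
  calc D A F M Z = AttrE A M (Z ∪ (F ∩ Pre A (D A F M Z))) := (D_fixed A F M Z).symm
    _ ⊆ AttrE A N (Z ∪ (F ∩ Pre A (D A F M Z))) := attrE_le_nat A h _

/-- The outer operator whose lfp is Eve's winning region. -/
def Phi : Set V →o Set V :=
  ⟨fun Z => ⋃ N, D A F N Z,
   fun Z Z' h => Set.iUnion_mono fun N => D_mono_Z A F h⟩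

/-- The candidate winning region. -/
def Wstar : Set V := (Phi A F).lfp

theorem Phi_Wstar : Phi A F (Wstar A F) = Wstar A F := map_lfp (Phi A F)

theorem D_subset_Wstar (N : ℕ) : D A F N (Wstar A F) ⊆ Wstar A F := by
  have : D A F N (Wstar A F) ⊆ ⋃ M, D A F M (Wstar A F) :=
    Set.subset_iUnion (fun M => D A F M (Wstar A F)) N
  have h2 : (⋃ M, D A F M (Wstar A F)) = Wstar A F := Phi_Wstar A F
  rw [h2] at this; exact this

theorem pre_Wstar : Pre A (Wstar A F) ⊆ Wstar A F := by
  refine subset_trans ?_ (D_subset_Wstar A F 1)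
  rw [← D_fixed A F 1]
  intro v hv
  exact Set.mem_union_right _ (Pre_mono A Set.subset_union_left hv)

/-! ### Ordinal stages and ranks -/

open scoped Classical

open OrdinalApprox in
/-- Ordinal-indexed approximations of `Wstar`. -/
noncomputable def st (o : Ordinal.{0}) : Set V := lfpApprox (Phi A F) ⊥ o

theorem mem_st_iff {v : V} {o : Ordinal.{0}} :
    v ∈ st A F o ↔ ∃ b < o, v ∈ Phi A F (st A F b) := by
  rw [st, OrdinalApprox.lfpApprox]
  constructor
  · intro hv
    simp only [Set.sup_eq_union, Set.mem_union, Set.iSup_eq_iUnion, Set.mem_iUnion,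
      Set.bot_eq_empty, Set.mem_empty_iff_false, false_or] at hv
    obtain ⟨b, hb, hvS⟩ := hv
    exact ⟨b, hb, hvS⟩
  · rintro ⟨b, hb, hv⟩
    simp only [Set.sup_eq_union, Set.mem_union, Set.iSup_eq_iUnion, Set.mem_iUnion,
      Set.bot_eq_empty, Set.mem_empty_iff_false, false_or]
    exact ⟨b, hb, hv⟩

theorem st_subset_Wstar (o : Ordinal.{0}) : st A F o ⊆ Wstar A F :=
  OrdinalApprox.lfpApprox_le_of_mem_fixedPoints (f := Phi A F) (x := ⊥)
    (OrderHom.map_lfp (Phi A F)) bot_le o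

theorem exists_phi_st {v : V} (hv : v ∈ Wstar A F) :
    ∃ o : Ordinal.{0}, v ∈ Phi A F (st A F o) := by
  have h := OrdinalApprox.lfpApprox_ord_eq_lfp (Phi A F)
  have hv' : v ∈ st A F (Cardinal.ord (Order.succ (Cardinal.mk (Set V)))) := by
    rw [st, h]; exact hv
  obtain ⟨b, _, hb⟩ := (mem_st_iff A F).mp hv'
  exact ⟨b, hb⟩

/-- The ordinal rank of a vertex of `Wstar`. -/
noncomputable def rank (v : V) : Ordinal.{0} :=
  if h : ∃ o : Ordinal.{0}, v ∈ Phi A F (st A F o) then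
    Ordinal.lt_wf.min {o | v ∈ Phi A F (st A F o)} h else 0

theorem rank_spec {v : V} (hv : v ∈ Wstar A F) : v ∈ Phi A F (st A F (rank A F v)) := by
  rw [rank, dif_pos (exists_phi_st A F hv)]
  exact Ordinal.lt_wf.min_mem _ (exists_phi_st A F hv)

theorem rank_min {v : V} {o : Ordinal.{0}} (h : v ∈ Phi A F (st A F o)) :
    rank A F v ≤ o := by
  rw [rank, dif_pos ⟨o, h⟩]
  exact not_lt.mp (Ordinal.lt_wf.not_lt_min _ h)

theorem rank_lt_of_mem_st {w : V} {o : Ordinal.{0}} (hw : w ∈ st A F o) :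
    rank A F w < o := by
  obtain ⟨b, hb, hw'⟩ := (mem_st_iff A F).mp hw
  exact lt_of_le_of_lt (rank_min A F hw') hb

/-! ### The per-vertex data of the positional strategy -/

theorem exists_Nv {v : V} (hv : v ∈ Wstar A F) :
    ∃ N, v ∈ D A F N (st A F (rank A F v)) := by
  have := rank_spec A F hv
  exact Set.mem_iUnion.mp this

/-- Bound `N` of the vertex. -/
noncomputable def Nv (v : V) : ℕ :=
  if h : ∃ N, v ∈ D A F N (st A F (rank A F v)) then Nat.find h else 0

/-- The attractor target used at `v`. -/
noncomputable def Tv (v : V) : Set V :=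
  st A F (rank A F v) ∪ (F ∩ Pre A (D A F (Nv A F v) (st A F (rank A F v))))

theorem Nv_spec {v : V} (hv : v ∈ Wstar A F) :
    v ∈ D A F (Nv A F v) (st A F (rank A F v)) := by
  rw [Nv, dif_pos (exists_Nv A F hv)]
  exact Nat.find_spec (exists_Nv A F hv)

theorem Nv_min {v : V} {N : ℕ} (h : v ∈ D A F N (st A F (rank A F v))) :
    Nv A F v ≤ N := by
  rw [Nv, dif_pos ⟨N, h⟩]
  exact Nat.find_min' _ h

theorem exists_nv {v : V} (hv : v ∈ Wstar A F) :
    ∃ j, v ∈ AttrE A j (Tv A F v) := by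
  refine ⟨Nv A F v, ?_⟩
  have := Nv_spec A F hv
  rw [← D_fixed A F] at this
  exact this

/-- Attractor rank of the vertex. -/
noncomputable def nv (v : V) : ℕ :=
  if h : ∃ j, v ∈ AttrE A j (Tv A F v) then Nat.find h else 0

theorem nv_spec {v : V} (hv : v ∈ Wstar A F) : v ∈ AttrE A (nv A F v) (Tv A F v) := by
  rw [nv, dif_pos (exists_nv A F hv)]
  exact Nat.find_spec (exists_nv A F hv)

theorem nv_min {v : V} {j : ℕ} (h : v ∈ AttrE A j (Tv A F v)) : nv A F v ≤ j := by
  rw [nv, dif_pos ⟨j, h⟩]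
  exact Nat.find_min' _ h

theorem nv_le_Nv {v : V} (hv : v ∈ Wstar A F) : nv A F v ≤ Nv A F v := by
  refine nv_min A F ?_
  have := Nv_spec A F hv
  rw [← D_fixed A F] at this
  exact this

theorem not_mem_st_rank {v : V} : v ∉ st A F (rank A F v) := fun h =>
  absurd (rank_lt_of_mem_st A F h) (lt_irrefl _)

/-- The set of "good" successors at `v`. -/
noncomputable def Good (v : V) : Set V :=
  if nv A F v = 0 then D A F (Nv A F v) (st A F (rank A F v))
  else AttrE A (nv A F v - 1) (Tv A F v)

theorem v_in_F_of_nv_zero {v : V} (hv : v ∈ Wstar A F) (h0 : nv A F v = 0) :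
    v ∈ F ∧ v ∈ Pre A (D A F (Nv A F v) (st A F (rank A F v))) := by
  have := nv_spec A F hv
  rw [h0, attrE_zero] at this
  rcases this with h | h
  · exact absurd h (not_mem_st_rank A F)
  · exact ⟨h.1, h.2⟩

theorem v_in_pre_of_nv_pos {v : V} (hv : v ∈ Wstar A F) (h0 : nv A F v ≠ 0) :
    v ∈ Pre A (AttrE A (nv A F v - 1) (Tv A F v)) := by
  obtain ⟨j, hj⟩ := Nat.exists_eq_succ_of_ne_zero h0
  have hspec := nv_spec A F hv
  rw [hj, attrE_succ] at hspec
  rcases hspec with h | h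
  · exact absurd (nv_min A F h) (by omega)
  · rw [hj]; exact h

theorem exists_good_move (v : V) :
    ∃ w, A.edge v w ∧ (v ∈ A.eve → v ∈ Wstar A F → w ∈ Good A F v) := by
  by_cases hv : v ∈ A.eve ∧ v ∈ Wstar A F
  · obtain ⟨he, hW⟩ := hv
    by_cases h0 : nv A F v = 0
    · obtain ⟨_, hpre⟩ := v_in_F_of_nv_zero A F hW h0
      obtain ⟨w, hw, hwD⟩ := pre_eve_exists A he hpre
      exact ⟨w, hw, fun _ _ => by rw [Good, if_pos h0]; exact hwD⟩
    · have hpre := v_in_pre_of_nv_pos A F hW h0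
      obtain ⟨w, hw, hwD⟩ := pre_eve_exists A he hpre
      exact ⟨w, hw, fun _ _ => by rw [Good, if_neg h0]; exact hwD⟩
  · obtain ⟨w, hw⟩ := A.succ v
    exact ⟨w, hw, fun h1 h2 => absurd ⟨h1, h2⟩ hv⟩

/-- The positional strategy. -/
noncomputable def sigma : PosStrategy A where
  move v := Classical.choose (exists_good_move A F v)
  legal v _ := (Classical.choose_spec (exists_good_move A F v)).1

theorem sigma_good {v : V} (he : v ∈ A.eve) (hW : v ∈ Wstar A F) :
    (sigma A F).move v ∈ Good A F v :=
  (Classical.choose_spec (exists_good_move A F v)).2 he hW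

/-- Any consistent successor of a `Wstar` vertex is a good successor. -/
theorem step_good {v w : V} (hW : v ∈ Wstar A F) (hvw : A.edge v w)
    (hcons : v ∈ A.eve → w = (sigma A F).move v) : w ∈ Good A F v := by
  by_cases he : v ∈ A.eve
  · rw [hcons he]; exact sigma_good A F he hW
  · by_cases h0 : nv A F v = 0
    · obtain ⟨_, hpre⟩ := v_in_F_of_nv_zero A F hW h0
      rw [Good, if_pos h0]
      exact pre_adam_forall A he hpre w hvw
    · have hpre := v_in_pre_of_nv_pos A F hW h0
      rw [Good, if_neg h0]
      exact pre_adam_forall A he hpre w hvw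

theorem good_subset_D {v : V} (hv : v ∈ Wstar A F) :
    Good A F v ⊆ D A F (Nv A F v) (st A F (rank A F v)) := by
  rw [Good]
  split
  · exact subset_rfl
  · rw [← D_fixed A F (Nv A F v)]
    exact attrE_le_nat A (by have := nv_le_Nv A F hv; omega) _

/-- The main invariant: good successors stay in `Wstar` and decrease the measure. -/
theorem good_inv {v w : V} (hv : v ∈ Wstar A F) (hw : w ∈ Good A F v) :
    w ∈ Wstar A F ∧ rank A F w ≤ rank A F v ∧
    (rank A F w = rank A F v → Nv A F w ≤ Nv A F v) ∧
    (rank A F w = rank A F v → Nv A F w = Nv A F v → nv A F v ≠ 0 →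
      nv A F w < nv A F v) := by
  have hwD : w ∈ D A F (Nv A F v) (st A F (rank A F v)) := good_subset_D A F hv hw
  have hwPhi : w ∈ Phi A F (st A F (rank A F v)) := by
    exact Set.mem_iUnion.mpr ⟨Nv A F v, hwD⟩
  have hwW : w ∈ Wstar A F := by
    have h1 : D A F (Nv A F v) (st A F (rank A F v)) ⊆ D A F (Nv A F v) (Wstar A F) :=
      D_mono_Z A F (st_subset_Wstar A F _)
    exact D_subset_Wstar A F _ (h1 hwD)
  have hrle : rank A F w ≤ rank A F v := rank_min A F hwPhi
  refine ⟨hwW, hrle, ?_, ?_⟩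
  · intro hr
    refine Nv_min A F ?_
    rw [hr]; exact hwD
  · intro hr hN h0
    rw [Good, if_neg h0] at hw
    have hT : Tv A F w = Tv A F v := by rw [Tv, Tv, hr, hN]
    have : w ∈ AttrE A (nv A F v - 1) (Tv A F w) := by rw [hT]; exact hw
    have := nv_min A F this
    omega

theorem v_in_F_reach {v : V} (hv : v ∈ Wstar A F) (h0 : nv A F v = 0) : v ∈ F :=
  (v_in_F_of_nv_zero A F hv h0).1

/-! ### Soundness: the positional strategy wins from `Wstar` -/

theorem eventually_const_of_antitone {α : Type*} [LinearOrder α] [WellFoundedLT α]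
    (r : ℕ → α) (h : ∀ k, r (k + 1) ≤ r k) : ∃ K, ∀ k, K ≤ k → r k = r K := by
  have hanti : Antitone r := antitone_nat_of_succ_le h
  have hne : (Set.range r).Nonempty := ⟨r 0, 0, rfl⟩
  obtain ⟨K, hK⟩ : ∃ K, r K = wellFounded_lt.min (Set.range r) hne :=
    wellFounded_lt.min_mem (Set.range r) hne
  refine ⟨K, fun k hk => le_antisymm ?_ ?_⟩
  · exact hanti hk
  · rw [hK]
    exact le_of_not_gt (wellFounded_lt.not_lt_min (Set.range r) ⟨k, rfl⟩)

theorem sigma_wins : ∀ v ∈ Wstar A F, PosWinsFrom A (sigma A F) (FinBuchi F) v := by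
  intro v hv π hplay h0 hcons
  -- every vertex of the play is in `Wstar`
  have hmem : ∀ k, π k ∈ Wstar A F := by
    intro k
    induction k with
    | zero => rw [h0]; exact hv
    | succ k ih =>
        exact (good_inv A F ih (step_good A F ih (hplay k) (fun he => hcons k he))).1
  have hgood : ∀ k, π (k + 1) ∈ Good A F (π k) := fun k =>
    step_good A F (hmem k) (hplay k) (fun he => hcons k he)
  have hinv := fun k => good_inv A F (hmem k) (hgood k)
  -- the rank stabilizes
  obtain ⟨K1, hK1⟩ := eventually_const_of_antitone (fun k => rank A F (π k))
    (fun k => (hinv k).2.1)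
  have hrconst : ∀ k, K1 ≤ k → rank A F (π (k + 1)) = rank A F (π k) := by
    intro k hk
    have h1 := hK1 (k + 1) (le_trans hk (Nat.le_succ k))
    have h2 := hK1 k hk
    rw [h1, h2]
  -- then `Nv` stabilizes
  obtain ⟨K2, hK2⟩ := eventually_const_of_antitone (fun k => Nv A F (π (K1 + k)))
    (fun k => by
      have := (hinv (K1 + k)).2.2.1 (hrconst (K1 + k) (Nat.le_add_right _ _))
      exact this)
  set K := K1 + K2 with hKdef
  have hNconst : ∀ k, K ≤ k → Nv A F (π (k + 1)) = Nv A F (π k) := by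
    intro k hk
    obtain ⟨m, rfl⟩ := Nat.exists_eq_add_of_le hk
    have h1 := hK2 (K2 + m + 1) (by omega)
    have h2 := hK2 (K2 + m) (by omega)
    have e1 : K1 + (K2 + m + 1) = K1 + K2 + m + 1 := by omega
    have e2 : K1 + (K2 + m) = K1 + K2 + m := by omega
    rw [e1] at h1; rw [e2] at h2
    rw [h1, h2]
  -- after stabilization `nv` strictly decreases until an `F`-visit
  have hdec : ∀ k, K ≤ k → nv A F (π k) ≠ 0 → nv A F (π (k + 1)) < nv A F (π k) := by
    intro k hk h0'
    exact (hinv k).2.2.2 (hrconst k (by omega)) (hNconst k hk) h0'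
  have reachF : ∀ n k, K ≤ k → nv A F (π k) ≤ n → ∃ j, j ≤ nv A F (π k) ∧ π (k + j) ∈ F := by
    intro n
    induction n with
    | zero =>
        intro k hk hle
        have h0' : nv A F (π k) = 0 := Nat.le_zero.mp hle
        exact ⟨0, by omega, by simpa using v_in_F_reach A F (hmem k) h0'⟩
    | succ n ih =>
        intro k hk hle
        by_cases h0' : nv A F (π k) = 0
        · exact ⟨0, by omega, by simpa using v_in_F_reach A F (hmem k) h0'⟩
        · have hlt := hdec k hk h0'
          obtain ⟨j, hj, hjF⟩ := ih (k + 1) (by omega) (by omega)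
          refine ⟨j + 1, by omega, ?_⟩
          have : k + (j + 1) = k + 1 + j := by omega
          rw [this]; exact hjF
  -- hence the distance is eventually bounded by `Nv (π K)`
  have hbound : ∀ k, K ≤ k → distB π F k ≤ (Nv A F (π K) : ℕ∞) := by
    intro k hk
    obtain ⟨j, hj, hjF⟩ := reachF (nv A F (π k)) k hk le_rfl
    have hNk : Nv A F (π k) = Nv A F (π K) := by
      obtain ⟨m, rfl⟩ := Nat.exists_eq_add_of_le hk
      clear hj hjF
      induction m with
      | zero => rfl
      | succ m ih =>
          have : K + (m + 1) = (K + m) + 1 := by omega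
          rw [this, hNconst (K + m) (by omega)]
          exact ih (by omega)
    have hjN : j ≤ Nv A F (π K) := le_trans hj (hNk ▸ nv_le_Nv A F (hmem k))
    calc distB π F k ≤ (j : ℕ∞) := sInf_le ⟨j, hjF, rfl⟩
      _ ≤ (Nv A F (π K) : ℕ∞) := by exact_mod_cast hjN
  -- conclude
  show Filter.limsup (fun k => distB π F k) Filter.atTop < ⊤
  have hls : Filter.limsup (fun k => distB π F k) Filter.atTop ≤ (Nv A F (π K) : ℕ∞) := by
    rw [Filter.limsup_eq]
    exact sInf_le (Filter.eventually_atTop.mpr ⟨K, hbound⟩)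
  exact lt_of_le_of_lt hls (WithTop.coe_lt_top _)

/-! ### Completeness: finite consistent paths avoiding `Wstar` -/

/-- A finite path consistent with the strategy `σ` that stays outside `Wstar`. -/
structure CP (σ : EveStrategy A) where
  f : ℕ → V
  len : ℕ
  hedge : ∀ k, k < len → A.edge (f k) (f (k + 1))
  hcons : ∀ k, k < len → f k ∈ A.eve → f (k + 1) = σ.move (hist f k) (f k)
  hclean : ∀ k, k ≤ len → f k ∉ Wstar A F

variable {σ : EveStrategy A}

/-- `q'` extends `q`. -/
def Ext (q q' : CP A F σ) : Prop :=
  q.len ≤ q'.len ∧ ∀ k, k ≤ q.len → q'.f k = q.f k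

theorem Ext.refl (q : CP A F σ) : Ext A F q q := ⟨le_rfl, fun _ _ => rfl⟩

theorem Ext.trans {q q' q'' : CP A F σ} (h : Ext A F q q') (h' : Ext A F q' q'') :
    Ext A F q q'' :=
  ⟨h.1.trans h'.1, fun k hk => by rw [h'.2 k (hk.trans h.1), h.2 k hk]⟩

theorem hist_congr {f g : ℕ → V} {k : ℕ} (h : ∀ j, j < k → f j = g j) :
    hist f k = hist g k := by
  unfold hist
  apply List.map_congr_left
  intro a ha
  exact h a (List.mem_range.mp ha)

/-- Extending a clean path by one vertex. -/
def extend1 (q : CP A F σ) (w : V) (he : A.edge (q.f q.len) w)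
    (hc : q.f q.len ∈ A.eve → w = σ.move (hist q.f q.len) (q.f q.len))
    (hw : w ∉ Wstar A F) : CP A F σ where
  f := fun k => if k ≤ q.len then q.f k else w
  len := q.len + 1
  hedge := by
    intro k hk
    show A.edge (if k ≤ q.len then q.f k else w) (if k + 1 ≤ q.len then q.f (k + 1) else w)
    by_cases h1 : k < q.len
    · rw [if_pos (by omega : k ≤ q.len), if_pos (by omega : k + 1 ≤ q.len)]
      exact q.hedge k h1
    · have hk' : k = q.len := by omega
      rw [if_pos (by omega : k ≤ q.len), if_neg (by omega : ¬ k + 1 ≤ q.len), hk']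
      exact he
  hcons := by
    intro k hk
    show (if k ≤ q.len then q.f k else w) ∈ A.eve →
      (if k + 1 ≤ q.len then q.f (k + 1) else w) =
        σ.move (hist (fun j => if j ≤ q.len then q.f j else w) k)
          (if k ≤ q.len then q.f k else w)
    have ehist : hist (fun j => if j ≤ q.len then q.f j else w) k = hist q.f k :=
      hist_congr (fun j hj => if_pos (by omega : j ≤ q.len))
    rw [ehist]
    by_cases h1 : k < q.len
    · rw [if_pos (by omega : k ≤ q.len), if_pos (by omega : k + 1 ≤ q.len)]
      exact q.hcons k h1
    · have hk' : k = q.len := by omega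
      rw [if_pos (by omega : k ≤ q.len), if_neg (by omega : ¬ k + 1 ≤ q.len), hk']
      exact hc
  hclean := by
    intro k hk
    show (if k ≤ q.len then q.f k else w) ∉ Wstar A F
    by_cases h1 : k ≤ q.len
    · rw [if_pos h1]
      exact q.hclean k h1
    · rw [if_neg h1]
      exact hw

theorem extend1_ext (q : CP A F σ) (w : V) (he : A.edge (q.f q.len) w)
    (hc : q.f q.len ∈ A.eve → w = σ.move (hist q.f q.len) (q.f q.len))
    (hw : w ∉ Wstar A F) : Ext A F q (extend1 A F q w he hc hw) :=
  ⟨Nat.le_succ _, fun k hk => by simp only [extend1, if_pos hk]⟩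

theorem extend1_last (q : CP A F σ) (w : V) (he : A.edge (q.f q.len) w)
    (hc : q.f q.len ∈ A.eve → w = σ.move (hist q.f q.len) (q.f q.len))
    (hw : w ∉ Wstar A F) :
    (extend1 A F q w he hc hw).f (extend1 A F q w he hc hw).len = w := by
  simp only [extend1, if_neg (by omega : ¬ q.len + 1 ≤ q.len)]

/-- Truncating a clean path. -/
def trunc (q : CP A F σ) (l : ℕ) (hl : l ≤ q.len) : CP A F σ where
  f := q.f
  len := l
  hedge := fun k hk => q.hedge k (by omega)
  hcons := fun k hk => q.hcons k (by omega)
  hclean := fun k hk => q.hclean k (by omega)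

/-- Main lemma: from any clean path, the play can be cleanly extended with an
arbitrarily long window containing no visit to `F`. -/
theorem window_lemma (q : CP A F σ) (i : ℕ) :
    ∃ q' : CP A F σ, Ext A F q q' ∧
      ∃ k, q.len ≤ k ∧ k + i ≤ q'.len ∧ ∀ j, j ≤ i → q'.f (k + j) ∉ F := by
  by_contra hcon
  push_neg at hcon
  set R : Set V := {w | ∃ q' : CP A F σ, Ext A F q q' ∧ q'.f q'.len = w} with hR
  set S : Set V := Wstar A F ∪ R with hS
  set T : Set V := Wstar A F ∪ (F ∩ Pre A S) with hT
  -- an endpoint of a clean extension that lies in `F` is in `Pre S`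
  have L2 : ∀ w ∈ R, w ∈ F → w ∈ Pre A S := by
    rintro w ⟨q', hq', rfl⟩ hwF
    by_cases he : q'.f q'.len ∈ A.eve
    · set w' := σ.move (hist q'.f q'.len) (q'.f q'.len) with hw'
      have hedge : A.edge (q'.f q'.len) w' := σ.legal _ _ he
      by_cases hw'W : w' ∈ Wstar A F
      · exact mem_pre_eve A he hedge (Or.inl hw'W)
      · refine mem_pre_eve A he hedge (Or.inr ?_)
        exact ⟨extend1 A F q' w' hedge (fun _ => rfl) hw'W,
          (Ext.trans A F hq' (extend1_ext A F q' w' hedge (fun _ => rfl) hw'W)),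
          extend1_last A F q' w' hedge (fun _ => rfl) hw'W⟩
    · refine mem_pre_adam A he ?_
      intro w' hedge
      by_cases hw'W : w' ∈ Wstar A F
      · exact Or.inl hw'W
      · refine Or.inr ?_
        exact ⟨extend1 A F q' w' hedge (fun h => absurd h he) hw'W,
          (Ext.trans A F hq' (extend1_ext A F q' w' hedge (fun h => absurd h he) hw'W)),
          extend1_last A F q' w' hedge (fun h => absurd h he) hw'W⟩
  -- if an endpoint avoids the `j`-step attractor of `T`, the path can be extended
  -- by `j` steps avoiding `T`
  have Inner : ∀ j, ∀ q' : CP A F σ, Ext A F q q' → q'.f q'.len ∉ AttrE A j T →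
      ∃ q'' : CP A F σ, Ext A F q' q'' ∧ q''.len = q'.len + j ∧
        ∀ t, t ≤ j → q''.f (q'.len + t) ∉ T := by
    intro j
    induction j with
    | zero =>
        intro q' hq' hA
        refine ⟨q', Ext.refl A F q', (Nat.add_zero _).symm, fun t ht => ?_⟩
        obtain rfl : t = 0 := Nat.le_zero.mp ht
        rw [Nat.add_zero]
        exact hA
    | succ j ih =>
        intro q' hq' hA
        have hT' : q'.f q'.len ∉ T := fun h => hA (subset_attrE A (j + 1) T h)
        have hAj : q'.f q'.len ∉ AttrE A j T := fun h =>
          hA (attrE_le_nat A (Nat.le_succ j) T h)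
        have hPre : q'.f q'.len ∉ Pre A (AttrE A j T) := fun h =>
          hA (Set.mem_union_right _ h)
        have hWs : q'.f q'.len ∉ Wstar A F := fun h => hT' (Or.inl h)
        -- find a successor outside `AttrE j T`
        have hsucc : ∃ w', A.edge (q'.f q'.len) w' ∧
            (q'.f q'.len ∈ A.eve → w' = σ.move (hist q'.f q'.len) (q'.f q'.len)) ∧
            w' ∉ AttrE A j T := by
          by_cases he : q'.f q'.len ∈ A.eve
          · refine ⟨σ.move (hist q'.f q'.len) (q'.f q'.len), σ.legal _ _ he,
              fun _ => rfl, fun hmem => ?_⟩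
            exact hPre (mem_pre_eve A he (σ.legal _ _ he) hmem)
          · by_contra hno
            push_neg at hno
            refine hPre (mem_pre_adam A he ?_)
            intro w' hedge
            by_contra hw'
            exact hw' (hno w' hedge (fun h => absurd h he))
        obtain ⟨w', hedge, hc, hw'A⟩ := hsucc
        have hw'W : w' ∉ Wstar A F := fun h =>
          hw'A (subset_attrE A j T (Or.inl h))
        set q2 := extend1 A F q' w' hedge hc hw'W with hq2
        have hq2ext : Ext A F q' q2 := extend1_ext A F q' w' hedge hc hw'W
        have hq2last : q2.f q2.len = w' := extend1_last A F q' w' hedge hc hw'W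
        have hq2len : q2.len = q'.len + 1 := rfl
        obtain ⟨q'', hext, hlen, hnT⟩ := ih q2 (Ext.trans A F hq' hq2ext) (hq2last ▸ hw'A)
        refine ⟨q'', Ext.trans A F hq2ext hext, by omega, fun t ht => ?_⟩
        match t with
        | 0 =>
            rw [Nat.add_zero]
            have : q''.f q'.len = q'.f q'.len := (Ext.trans A F hq2ext hext).2 q'.len le_rfl
            rw [this]
            exact hT'
        | Nat.succ s =>
            have harith : q'.len + (s + 1) = q2.len + s := by omega
            rw [harith]
            exact hnT s (by omega)
  -- every clean endpoint is in the `i`-step attractor of `T`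
  have C : R ⊆ AttrE A i T := by
    rintro w ⟨q', hq', rfl⟩
    by_contra hA
    obtain ⟨q'', hext, hlen, hnT⟩ := Inner i q' hq' hA
    have hqq'' : Ext A F q q'' := Ext.trans A F hq' hext
    have hnF : ∀ j, j ≤ i → q''.f (q'.len + j) ∉ F := by
      intro j hj hF
      have hRmem : q''.f (q'.len + j) ∈ R := by
        refine ⟨trunc A F q'' (q'.len + j) (by omega), ?_, rfl⟩
        exact ⟨hq'.1.trans (by omega : q'.len ≤ q'.len + j),
          fun k hk => hqq''.2 k hk⟩
      exact hnT j hj (Or.inr ⟨hF, L2 _ hRmem hF⟩)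
    obtain ⟨j, hj, hjF⟩ := hcon q'' hqq'' q'.len hq'.1 (by omega)
    exact hnF j hj hjF
  -- coinduction: `S ⊆ D i Wstar ⊆ Wstar`, contradicting cleanness
  have hSD : S ⊆ D A F i (Wstar A F) := by
    refine D_coind A F ?_
    intro w hw
    rcases hw with hw | hw
    · exact subset_attrE A i _ (Or.inl hw)
    · exact C hw
  have : q.f q.len ∈ R := ⟨q, Ext.refl A F q, rfl⟩
  exact q.hclean q.len le_rfl (D_subset_Wstar A F i (hSD (Or.inr this)))

/-! ### Completeness: Eve's winning region is contained in `Wstar` -/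

theorem WE_subset_Wstar : WE A (FinBuchi F) ⊆ Wstar A F := by
  intro v hv
  by_contra hvW
  obtain ⟨σ, hσ⟩ := hv
  -- the base (empty) clean path at `v`
  let q0 : CP A F σ :=
    { f := fun _ => v
      len := 0
      hedge := fun k hk => absurd hk (by omega)
      hcons := fun k hk => absurd hk (by omega)
      hclean := fun k _ => hvW }
  -- the chain of extensions with ever longer `F`-free windows
  let g : ℕ → CP A F σ := fun n =>
    Nat.rec q0 (fun n qn => Classical.choose (window_lemma A F qn (n + 1))) n
  have hg : ∀ n, Ext A F (g n) (g (n + 1)) ∧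
      ∃ k, (g n).len ≤ k ∧ k + (n + 1) ≤ (g (n + 1)).len ∧
        ∀ j, j ≤ n + 1 → (g (n + 1)).f (k + j) ∉ F :=
    fun n => Classical.choose_spec (window_lemma A F (g n) (n + 1))
  have hExt : ∀ m n, m ≤ n → Ext A F (g m) (g n) := by
    intro m n h
    induction h with
    | refl => exact Ext.refl A F (g m)
    | step h ih => exact Ext.trans A F ih (hg _).1
  have hlenge : ∀ n, n ≤ (g n).len := by
    intro n
    cases n with
    | zero => exact Nat.zero_le _
    | succ n =>
        obtain ⟨k, hk1, hk2, _⟩ := (hg n).2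
        omega
  -- the limit play
  set π : ℕ → V := fun k => (g k).f k with hπ
  have stab : ∀ n k, k ≤ (g n).len → π k = (g n).f k := by
    intro n k hk
    rcases le_total k n with h | h
    · have h1 := (hExt k n h).2 k (hlenge k)
      simpa [hπ] using h1.symm
    · have h1 := (hExt n k h).2 k hk
      simpa [hπ] using h1
  have hplay : IsPlay A π := by
    intro k
    have hk : k + 1 ≤ (g (k + 1)).len := hlenge (k + 1)
    rw [stab (k + 1) k (by omega), stab (k + 1) (k + 1) hk]
    exact (g (k + 1)).hedge k (by omega)
  have h0 : π 0 = v := rfl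
  have hcons : EveConsistent A σ π := by
    intro k hke
    have hk : k + 1 ≤ (g (k + 1)).len := hlenge (k + 1)
    have hhist : hist π k = hist (g (k + 1)).f k :=
      hist_congr (fun j hj => stab (k + 1) j (by omega))
    rw [stab (k + 1) (k + 1) hk, hhist]
    rw [stab (k + 1) k (by omega)] at hke ⊢
    exact (g (k + 1)).hcons k (by omega) hke
  -- the play has unbounded distances, contradicting the finitary Büchi condition
  have hwin := hσ π hplay h0 hcons
  have hlt : Filter.limsup (fun k => distB π F k) Filter.atTop < ⊤ := hwin
  obtain ⟨m, hm⟩ := WithTop.ne_top_iff_exists.mp (ne_top_of_lt hlt)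
  have hlt' : Filter.limsup (fun k => distB π F k) Filter.atTop < ((m : ℕ∞) + 1) := by
    have hm' : (m : ℕ∞) = Filter.limsup (fun k => distB π F k) Filter.atTop := by
      exact_mod_cast hm
    rw [← hm']
    have h' : (m : ℕ) < m + 1 := by omega
    exact_mod_cast h'
  have hev := Filter.eventually_lt_of_limsup_lt hlt'
  obtain ⟨K, hK⟩ := Filter.eventually_atTop.mp hev
  -- take the window created at stage `n := K + m`
  set n := K + m with hn
  obtain ⟨k, hk1, hk2, hkF⟩ := (hg n).2
  have hkK : K ≤ k := le_trans (by omega) (le_trans (hlenge n) hk1)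
  have hnF : ∀ j, j ≤ n + 1 → π (k + j) ∉ F := by
    intro j hj
    rw [stab (n + 1) (k + j) (by omega)]
    exact hkF j hj
  have hdist : ((m : ℕ∞) + 1) ≤ distB π F k := by
    refine le_sInf ?_
    rintro x ⟨j, hjF, rfl⟩
    have hjgt : n + 1 < j := by
      by_contra h
      exact hnF j (by omega) hjF
    have hj' : (m : ℕ) + 1 ≤ j := by omega
    show ((m : ℕ∞) + 1) ≤ (j : ℕ∞)
    exact_mod_cast hj'
  exact absurd (hK k hkK) (not_lt.mpr hdist)

end Stmt8Aux


open GameDefs in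
/-- positional strategies suffice for Eve in finitary Büchi games. -/
theorem stmt8 {V : Type} [Countable V] (A : Arena V) (F : Set V) :
    ∃ σ : PosStrategy A, ∀ v ∈ WE A (FinBuchi F), PosWinsFrom A σ (FinBuchi F) v := by
  exact ⟨Stmt8Aux.sigma A F, fun v hv =>
    Stmt8Aux.sigma_wins A F v (Stmt8Aux.WE_subset_Wstar A F hv)⟩
end

section
/- There exists an arena A over a countable vertex set with a Büchi set F ⊆ V and a vertex v_0 such that Adam has a winning strategy from v_0 against the finitary Büchi condition FinBüchi(F) (i.e., ensuring every consistent play lies outside FinBüchi(F)), but Adam has no finite-memory winning strategy from v_0 against FinBüchi(F). -/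
open Filter Set

namespace Stmt9Aux
open GameDefs Filter Set

/-- The counterexample arena on `ℕ`: all vertices belong to Adam; from `0` there are
edges to every vertex, from `n+1` the only edge goes to `n`. -/
def A : Arena ℕ where
  eve := ∅
  edge n m := n = 0 ∨ m + 1 = n
  succ n := by
    cases n with
    | zero => exact ⟨0, Or.inl rfl⟩
    | succ m => exact ⟨m, Or.inr rfl⟩

lemma descend {π : ℕ → ℕ} (hp : IsPlay A π) :
    ∀ j k, j ≤ π k → π (k + j) = π k - j := by
  intro j
  induction j with
  | zero => simp
  | succ j ih =>
    intro k h
    have h1 : π (k + j) = π k - j := ih k (Nat.le_of_succ_le h)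
    have h2 : π (k + j) ≠ 0 := by omega
    rcases hp (k + j) with h3 | h3
    · exact absurd h3 h2
    · show π (k + j + 1) = π k - (j + 1)
      omega

lemma zero_later {π : ℕ → ℕ} (hp : IsPlay A π) (k : ℕ) : π (k + π k) = 0 := by
  have := descend hp (π k) k le_rfl
  omega

lemma distB_eq {π : ℕ → ℕ} (hp : IsPlay A π) (k : ℕ) :
    distB π ({0} : Set ℕ) k = (π k : ℕ∞) := by
  unfold distB
  apply le_antisymm
  · exact sInf_le ⟨π k, by simpa using zero_later hp k, rfl⟩
  · apply le_sInf
    rintro x ⟨j, hj, rfl⟩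
    simp only [mem_setOf_eq, mem_singleton_iff] at hj
    have : π k ≤ j := by
      by_contra h
      push_neg at h
      have := descend hp j k h.le
      omega
    show (π k : ℕ∞) ≤ (j : ℕ∞)
    exact Nat.cast_le.mpr this

end Stmt9Aux

open GameDefs in
/-- there is a countable arena where Adam wins against the finitary Büchi
condition but has no finite-memory winning strategy. -/
theorem stmt9 :
    ∃ V : Type, ∃ _ : Countable V, ∃ A : Arena V, ∃ F : Set V, ∃ v0 : V,
      (∃ τ : AdamStrategy A, AdamWinsFrom A τ (FinBuchi F) v0) ∧
      ¬ ∃ Mem : Memory V, ∃ _ : Finite Mem.M, ∃ τ : AdamMemStrategy A Mem,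
          AdamMemWinsFrom A Mem τ (FinBuchi F) v0 := by
  refine ⟨ℕ, inferInstance, Stmt9Aux.A, {0}, 0, ?_, ?_⟩
  · -- Adam wins with the history-length strategy
    refine ⟨⟨fun h v => if v = 0 then h.length + 1 else v - 1, ?_⟩, ?_⟩
    · intro h v _
      split_ifs with hv
      · exact Or.inl hv
      · exact Or.inr (by omega)
    · intro π hp h0 hc hFin
      have hd : ∀ k, distB π ({0} : Set ℕ) k = (π k : ℕ∞) := Stmt9Aux.distB_eq hp
      simp only [FinBuchi, mem_setOf_eq, hd] at hFin
      obtain ⟨n, hn⟩ := WithTop.ne_top_iff_exists.mp hFin.ne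
      have hlt : Filter.limsup (fun k => (π k : ℕ∞)) Filter.atTop < ((n + 1 : ℕ) : ℕ∞) := by
        rw [← hn]
        exact Nat.cast_lt.mpr (Nat.lt_succ_self n)
      have hev := Filter.eventually_lt_of_limsup_lt hlt
      obtain ⟨K, hK⟩ := Filter.eventually_atTop.mp hev
      set t := max K n with ht
      set k0 := t + π t with hk0
      have hz : π k0 = 0 := Stmt9Aux.zero_later hp t
      have hstep := hc k0 (Set.notMem_empty _)
      rw [hz] at hstep
      simp only [if_pos rfl, hist, List.length_map, List.length_range] at hstep
      have h1 : π (k0 + 1) = k0 + 1 := hstep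
      have h2 := hK (k0 + 1) (by omega)
      rw [h1] at h2
      have : (k0 + 1 : ℕ) < n + 1 := by exact_mod_cast h2
      omega
  · -- no finite-memory winning strategy
    rintro ⟨Mem, hfin, τ, hwin⟩
    let s : ℕ → ℕ × Mem.M := fun k =>
      Nat.rec (⟨0, Mem.m0⟩)
        (fun _ p => ⟨τ.move p.1 p.2, Mem.upd p.2 p.1 (τ.move p.1 p.2)⟩) k
    let π : ℕ → ℕ := fun k => (s k).1
    have hπ : ∀ k, π (k + 1) = τ.move (π k) (s k).2 := fun _ => rfl
    have hm : ∀ k, memRun Mem π k = (s k).2 := by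
      intro k
      induction k with
      | zero => rfl
      | succ k ih =>
        show Mem.upd (memRun Mem π k) (π k) (π (k + 1)) = (s (k + 1)).2
        rw [ih]
    have hplay : IsPlay Stmt9Aux.A π := by
      intro k
      have := τ.legal (π k) (s k).2 (Set.notMem_empty _)
      rw [hπ k]
      exact this
    have hcons : AdamMemConsistent Stmt9Aux.A Mem τ π := by
      intro k _
      rw [hm k]
    have h0 : π 0 = 0 := rfl
    refine hwin π hplay h0 hcons ?_
    obtain ⟨B, hB⟩ := Finite.exists_le (fun m : Mem.M => τ.move 0 m)
    have hbd : ∀ k, π k ≤ B := by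
      intro k
      induction k with
      | zero => exact Nat.zero_le B
      | succ k ih =>
        by_cases h : π k = 0
        · rw [hπ k, h]
          exact hB _
        · rcases hplay k with h1 | h1
          · exact absurd h1 h
          · omega
    have hle : ∀ k, distB π ({0} : Set ℕ) k ≤ (B : ℕ∞) := by
      intro k
      rw [Stmt9Aux.distB_eq hplay]
      exact_mod_cast hbd k
    have hls : Filter.limsup (fun k => distB π ({0} : Set ℕ) k) Filter.atTop ≤ (B : ℕ∞) :=
      Filter.limsup_le_of_le (by isBoundedDefault) (Filter.Eventually.of_forall hle)
    exact lt_of_le_of_lt hls (by simp)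
end
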